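/- arXiv:2103.03969 — 9 statements merged into one kernel-verified Lean document; each statement's English description precedes it below -/
import Mathlib

section
/- Let (c_n)_{n≥0} be a sequence in a commutative ring and α, β variables. Then for every positive integer n: (β−α) · det_{0≤i,j≤n−2}(αβ c_{i+j} + (α+β) c_{i+j+1} + c_{i+j+2}) · det_{0≤i,j≤n−1}(c_{i+j}) = det_{0≤i,j≤n−2}(α c_{i+j} + c_{i+j+1}) · det_{0≤i,j≤n−1}(β c_{i+j} + c_{i+j+1}) − det_{0≤i,j≤n−2}(β c_{i+j} + c_{i+j+1}) · det_{0≤i,j≤n−1}(α c_{i+j} + c_{i+j+1}). -/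
open Matrix Finset

namespace HankelAux

variable {R : Type*} [CommRing R]

def skf (k t : ℕ) : ℕ := if t < k then t else t + 1

lemma neg_one_pow_mul_self (k : ℕ) : ((-1 : R) ^ k) * (-1) ^ k = 1 := by
  rw [← pow_add]; exact Even.neg_one_pow ⟨k, by ring⟩

lemma succAbove_val {p : ℕ} (pos : Fin (p + 1)) (j : Fin p) :
    ((pos.succAbove j : Fin (p + 1)) : ℕ) = skf pos.val j.val := by
  rw [Fin.succAbove, skf]
  split_ifs with h1 h2 h2
  · rfl
  · exact absurd (by simpa [Fin.lt_def] using h1) h2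
  · exact absurd (by simpa [Fin.lt_def] using h2) h1
  · rfl

lemma cons_val_succ {M : Type*} {p : ℕ} (x : M) (s : Fin p → M) (i : Fin (p + 1)) (t : ℕ)
    (ht : (i : ℕ) = t + 1) (htp : t < p) : (Fin.cons x s : Fin (p + 1) → M) i = s ⟨t, htp⟩ := by
  have h1 : i = Fin.succ ⟨t, htp⟩ := Fin.ext (by simpa using ht)
  rw [h1, Fin.cons_succ]

lemma cons_val_zero' {M : Type*} {p : ℕ} (x : M) (s : Fin p → M) (i : Fin (p + 1))
    (ht : (i : ℕ) = 0) : (Fin.cons x s : Fin (p + 1) → M) i = x := by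
  have h1 : i = 0 := Fin.ext (by simpa using ht)
  rw [h1, Fin.cons_zero]

section Insert
variable {M : Type*} [AddCommGroup M] [Module R M]

theorem insertNth_eq_cons_comp_cycleRange {q : ℕ} (i : Fin (q + 1)) (x : M) (s : Fin q → M) :
    Fin.insertNth i x s = (Fin.cons x s) ∘ i.cycleRange := by
  funext j
  rcases eq_or_ne j i with rfl | hj
  · simp [Fin.insertNth_apply_same, Fin.cycleRange_self]
  · obtain ⟨t, rfl⟩ := Fin.exists_succAbove_eq hj
    simp [Fin.insertNth_apply_succAbove, Fin.cycleRange_succAbove]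

theorem alt_insertNth {q : ℕ} (f : M [⋀^Fin (q + 1)]→ₗ[R] R) (i : Fin (q + 1)) (x : M)
    (s : Fin q → M) :
    f (Fin.insertNth i x s) = (-1 : R) ^ (i : ℕ) * f (Fin.cons x s) := by
  rw [insertNth_eq_cons_comp_cycleRange, f.map_perm, Fin.sign_cycleRange]
  simp [Units.smul_def, zsmul_eq_mul]

theorem alt_cons_eq_insertNth {q : ℕ} (f : M [⋀^Fin (q + 1)]→ₗ[R] R) (i : Fin (q + 1)) (x : M)
    (s : Fin q → M) :
    f (Fin.cons x s) = (-1 : R) ^ (i : ℕ) * f (Fin.insertNth i x s) := by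
  rw [alt_insertNth, ← mul_assoc, neg_one_pow_mul_self, one_mul]

end Insert

/-- The basic syzygy among the `N+1` maximal minors of an `(N+1) × N` matrix. -/
theorem syzygy {N : ℕ} (u : Fin (N + 1) → (Fin N → R)) (L : (Fin N → R) →ₗ[R] R) :
    ∑ j : Fin (N + 1), (-1 : R) ^ (j : ℕ) *
      Matrix.det (Matrix.of fun r s : Fin N => u (j.succAbove r) s) * L (u j) = 0 := by
  have key : (∑ j : Fin (N + 1), ((-1 : R) ^ (j : ℕ) *
      Matrix.det (Matrix.of fun r s : Fin N => u (j.succAbove r) s)) • u j) = 0 := by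
    funext i
    rw [Finset.sum_apply]
    simp only [Pi.smul_apply, smul_eq_mul, Pi.zero_apply]
    set W : Matrix (Fin (N + 1)) (Fin (N + 1)) R :=
      Matrix.of fun j t => if h : (t : ℕ) < N then u j ⟨t, h⟩ else u j i with hW
    have hdet : W.det = 0 := by
      apply Matrix.det_zero_of_column_eq (i := Fin.castSucc i) (j := Fin.last N)
      · rw [ne_eq, Fin.ext_iff]
        simp only [Fin.coe_castSucc, Fin.val_last]
        omega
      · intro k
        simp [hW, i.isLt]
    have hexp := Matrix.det_succ_column W (Fin.last N)
    rw [hdet] at hexp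
    have hM : ∀ r : Fin (N + 1), W.submatrix r.succAbove (Fin.last N).succAbove =
        Matrix.of fun a b : Fin N => u (r.succAbove a) b := by
      intro r
      ext a b
      simp [hW, Fin.succAbove_last, b.isLt]
    have h2 : (0 : R) = (-1 : R) ^ N * ∑ r : Fin (N + 1), (((-1 : R) ^ (r : ℕ) *
        Matrix.det (Matrix.of fun a b : Fin N => u (r.succAbove a) b)) * u r i) := by
      refine hexp.trans ?_
      rw [Finset.mul_sum]
      refine Finset.sum_congr rfl fun r _ => ?_
      rw [hM r]
      have hw : W r (Fin.last N) = u r i := by simp [hW]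
      rw [hw, Fin.val_last, pow_add]
      ring
    have h3 := congrArg (fun z => (-1 : R) ^ N * z) h2
    simp only [mul_zero] at h3
    rw [← mul_assoc, neg_one_pow_mul_self, one_mul] at h3
    exact h3.symm
  calc ∑ j : Fin (N + 1), (-1 : R) ^ (j : ℕ) *
        Matrix.det (Matrix.of fun r s : Fin N => u (j.succAbove r) s) * L (u j)
      = ∑ j : Fin (N + 1), L (((-1 : R) ^ (j : ℕ) *
        Matrix.det (Matrix.of fun r s : Fin N => u (j.succAbove r) s)) • u j) :=
        Finset.sum_congr rfl (fun j _ => by rw [LinearMap.map_smul, smul_eq_mul])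
    _ = L (∑ j : Fin (N + 1), ((-1 : R) ^ (j : ℕ) *
        Matrix.det (Matrix.of fun r s : Fin N => u (j.succAbove r) s)) • u j) :=
        (map_sum L _ _).symm
    _ = 0 := by rw [key, map_zero]

def erow1 (m : ℕ) : Fin (m + 2) → R := fun t => if (t : ℕ) = m then 1 else 0
def erow2 (m : ℕ) : Fin (m + 2) → R := fun t => if (t : ℕ) = m + 1 then 1 else 0
def vrow (c : ℕ → R) (m t : ℕ) : Fin (m + 2) → R := fun j => c (t + j)
def wrow (c : ℕ → R) (α : R) (m t : ℕ) : Fin (m + 2) → R := α • vrow c m t + vrow c m (t + 1)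

def DRA (m : ℕ) : (Fin (m + 2) → R) [⋀^Fin (m + 2)]→ₗ[R] R := Matrix.detRowAlternating

def g1 (m : ℕ) : (Fin (m + 2) → R) [⋀^Fin (m + 1)]→ₗ[R] R :=
  (DRA (R := R) m).curryLeft (erow2 m)

def f2 (m : ℕ) : (Fin (m + 2) → R) [⋀^Fin m]→ₗ[R] R :=
  (((DRA (R := R) m).curryLeft (erow1 m)).curryLeft (erow2 m))

lemma g1_apply (m : ℕ) (s : Fin (m + 1) → Fin (m + 2) → R) :
    g1 m s = DRA m (Fin.cons (erow2 m) s) := rfl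

lemma f2_apply (m : ℕ) (s : Fin m → Fin (m + 2) → R) :
    f2 m s = DRA m (Fin.cons (erow1 m) (Fin.cons (erow2 m) s)) := rfl

def ACol (c : ℕ → R) (m k : ℕ) : R := g1 m (fun j : Fin (m + 1) => vrow c m (skf k j))
def BCol (c : ℕ → R) (m k : ℕ) : R := f2 m (fun j : Fin m => vrow c m (skf k j))
def PsiCol (c : ℕ → R) (α : R) (m k : ℕ) : R := f2 m (fun j : Fin m => wrow c α m (skf k j))
def PhiCol (c : ℕ → R) (α : R) (m : ℕ) : R := g1 m (fun j : Fin (m + 1) => wrow c α m j)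

/-! ### data for the syzygy application -/

def baseT (c : ℕ → R) (m k : ℕ) : Fin (m + 1) → Fin (m + 2) → R :=
  Fin.cons (erow2 m) (fun j : Fin m => vrow c m (skf k j))

def LT (c : ℕ → R) (m k : ℕ) : (Fin (m + 2) → R) →ₗ[R] R where
  toFun := fun x => DRA m (Fin.cons x (baseT c m k))
  map_add' := fun a b => by exact (DRA (R := R) m).toMultilinearMap.cons_add (baseT c m k) a b
  map_smul' := fun r a => by exact (DRA (R := R) m).toMultilinearMap.cons_smul (baseT c m k) r a

def uT (c : ℕ → R) (α : R) (m : ℕ) : Fin (m + 3) → Fin (m + 2) → R :=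
  Fin.cons (erow1 m) (Fin.cons (erow2 m) (fun t : Fin (m + 1) => wrow c α m t))

def LvT (c : ℕ → R) (m k r : ℕ) : R := DRA m (Fin.cons (vrow c m r) (baseT c m k))

lemma LT_apply (c : ℕ → R) (m k : ℕ) (x : Fin (m + 2) → R) :
    LT c m k x = DRA m (Fin.cons x (baseT c m k)) := rfl

/-! ### value lemmas -/

lemma Lv_zero (c : ℕ → R) (m k : ℕ) (hk : k ≤ m) (r : ℕ) (hrm : r ≤ m + 1) (hrk : r ≠ k)
    (hrl : r ≠ m + 1) : LvT c m k r = 0 := by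
  have hrm' : r ≤ m := by omega
  obtain ⟨q, hq1, hq2⟩ : ∃ q, q < m ∧ skf k q = r := by
    refine ⟨if r < k then r else r - 1, ?_, ?_⟩
    · split_ifs <;> omega
    · unfold skf; split_ifs <;> omega
  apply AlternatingMap.map_eq_zero_of_eq (DRA m) _
    (i := (0 : Fin (m + 2))) (j := ⟨q + 2, by omega⟩)
  · rw [Fin.cons_zero]
    rw [cons_val_succ _ _ _ (q + 1) rfl (by omega)]
    rw [show baseT c m k = Fin.cons (erow2 m) (fun j : Fin m => vrow c m (skf k j)) from rfl]
    rw [cons_val_succ _ _ _ q rfl (by omega)]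
    simp only [Fin.val_mk]
    rw [hq2]
  · rw [ne_eq, Fin.ext_iff]
    simp

lemma Lv_k (c : ℕ → R) (m k : ℕ) (hk : k ≤ m) :
    LvT c m k k = (-1 : R) ^ (k + 1) * ACol c m (m + 1) := by
  have hrw := alt_cons_eq_insertNth (q := m + 1) (DRA (R := R) m)
    (⟨k + 1, by omega⟩ : Fin (m + 2)) (vrow c m k) (baseT c m k)
  rw [LvT, hrw]
  have hins : Fin.insertNth (⟨k + 1, by omega⟩ : Fin (m + 2)) (vrow c m k) (baseT c m k) =
      (Fin.cons (erow2 m) (fun j : Fin (m + 1) => vrow c m (skf (m + 1) j)) :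
        Fin (m + 2) → Fin (m + 2) → R) := by
    funext j
    rcases eq_or_ne j (⟨k + 1, by omega⟩ : Fin (m + 2)) with rfl | hne
    · rw [Fin.insertNth_apply_same]
      rw [cons_val_succ _ _ _ k (by simp) (by omega)]
      simp only [Fin.val_mk]
      rw [show skf (m + 1) k = k from by unfold skf; split_ifs <;> omega]
    · obtain ⟨t, rfl⟩ := Fin.exists_succAbove_eq hne
      rw [Fin.insertNth_apply_succAbove]
      induction t using Fin.cases with
      | zero =>
        rw [cons_val_zero' _ _ _ (by rw [succAbove_val]; unfold skf; simp)]
        rw [show baseT c m k = Fin.cons (erow2 m) (fun j : Fin m => vrow c m (skf k j)) from rfl,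
          Fin.cons_zero]
      | succ a =>
        have hb := a.isLt
        have hv : (((⟨k + 1, by omega⟩ : Fin (m + 2)).succAbove a.succ : Fin (m + 2)) : ℕ)
            = skf k a + 1 := by
          rw [succAbove_val]
          unfold skf
          simp only [Fin.val_mk, Fin.val_succ]
          split_ifs <;> omega
        rw [cons_val_succ _ _ _ (skf k a) hv (by unfold skf; split_ifs <;> omega)]
        rw [show baseT c m k = Fin.cons (erow2 m) (fun j : Fin m => vrow c m (skf k j)) from rfl,
          Fin.cons_succ]
        simp only [Fin.val_mk]
        rw [show skf (m + 1) (skf k a) = skf k a from by unfold skf; split_ifs <;> omega]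
  rw [hins]
  rfl

lemma Lv_last (c : ℕ → R) (m k : ℕ) (hk : k ≤ m) :
    LvT c m k (m + 1) = (-1 : R) ^ (m + 1) * ACol c m k := by
  have hrw := alt_cons_eq_insertNth (q := m + 1) (DRA (R := R) m)
    (Fin.last (m + 1)) (vrow c m (m + 1)) (baseT c m k)
  rw [LvT, hrw]
  have hins : Fin.insertNth (Fin.last (m + 1)) (vrow c m (m + 1)) (baseT c m k) =
      (Fin.cons (erow2 m) (fun j : Fin (m + 1) => vrow c m (skf k j)) :
        Fin (m + 2) → Fin (m + 2) → R) := by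
    rw [Fin.insertNth_last']
    funext j
    induction j using Fin.lastCases with
    | last =>
      rw [Fin.snoc_last]
      rw [cons_val_succ _ _ _ m (by simp) (by omega)]
      simp only [Fin.val_mk]
      rw [show skf k m = m + 1 from by unfold skf; split_ifs <;> omega]
    | cast a =>
      rw [Fin.snoc_castSucc]
      induction a using Fin.cases with
      | zero =>
        rw [cons_val_zero' _ _ _ (by simp)]
        rw [show baseT c m k = Fin.cons (erow2 m) (fun j : Fin m => vrow c m (skf k j)) from rfl,
          Fin.cons_zero]
      | succ b =>
        have hb := b.isLt
        rw [cons_val_succ _ _ _ b (by simp) (by omega)]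
        rw [show baseT c m k = Fin.cons (erow2 m) (fun j : Fin m => vrow c m (skf k j)) from rfl,
          Fin.cons_succ]
  rw [hins]
  rfl

lemma Le1 (c : ℕ → R) (m k : ℕ) : LT c m k (erow1 m) = BCol c m k := rfl

lemma Le2 (c : ℕ → R) (m k : ℕ) : LT c m k (erow2 m) = 0 := by
  rw [LT_apply]
  apply AlternatingMap.map_eq_zero_of_eq (DRA m) _
    (i := (0 : Fin (m + 2))) (j := (1 : Fin (m + 2)))
  · rw [Fin.cons_zero, cons_val_succ _ _ _ 0 (by simp) (by omega)]
    rw [show baseT c m k = Fin.cons (erow2 m) (fun j : Fin m => vrow c m (skf k j)) from rfl]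
    rw [cons_val_zero' _ _ _ rfl]
  · rw [ne_eq, Fin.ext_iff]
    simp

lemma Lw (c : ℕ → R) (α : R) (m k t : ℕ) :
    LT c m k (wrow c α m t) = α * LvT c m k t + LvT c m k (t + 1) := by
  rw [show wrow c α m t = α • vrow c m t + vrow c m (t + 1) from rfl, map_add,
    LinearMap.map_smul, smul_eq_mul]
  rfl

theorem TkMain (c : ℕ → R) (α : R) (m k : ℕ) (hk : k ≤ m) :
    PsiCol c α m m * ACol c m k =
      PhiCol c α m * BCol c m k - α * (PsiCol c α m k * ACol c m (m + 1)) +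
        (if k = 0 then 0 else PsiCol c α m (k - 1) * ACol c m (m + 1)) := by
  have SZ := syzygy (uT c α m) (LT c m k)
  rw [Fin.sum_univ_succ, Fin.sum_univ_succ] at SZ
  have hdet0 : Matrix.det (Matrix.of fun r s : Fin (m + 2) =>
      uT c α m ((0 : Fin (m + 3)).succAbove r) s) = PhiCol c α m := by
    have he : (fun r s : Fin (m + 2) => uT c α m ((0 : Fin (m + 3)).succAbove r) s) =
        (Fin.cons (erow2 m) (fun t : Fin (m + 1) => wrow c α m t) :
          Fin (m + 2) → Fin (m + 2) → R) := by
      funext r s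
      rw [Fin.succAbove_zero]
      rw [show uT c α m = Fin.cons (erow1 m) (Fin.cons (erow2 m)
        (fun t : Fin (m + 1) => wrow c α m t)) from rfl, Fin.cons_succ]
    rw [he]
    rfl
  have hu0 : uT c α m 0 = erow1 m := rfl
  have hu1 : uT c α m (Fin.succ (0 : Fin (m + 2))) = erow2 m := rfl
  have huT : ∀ t : Fin (m + 1), uT c α m t.succ.succ = wrow c α m t := fun t => rfl
  have hdetT : ∀ t : Fin (m + 1), Matrix.det (Matrix.of fun r s : Fin (m + 2) =>
      uT c α m ((t.succ.succ).succAbove r) s) = PsiCol c α m t := by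
    intro t
    have he : (fun r s : Fin (m + 2) => uT c α m ((t.succ.succ).succAbove r) s) =
        (Fin.cons (erow1 m) (Fin.cons (erow2 m) (fun j : Fin m => wrow c α m (skf t j))) :
          Fin (m + 2) → Fin (m + 2) → R) := by
      funext r
      induction r using Fin.cases with
      | zero =>
        have h0 : (t.succ.succ : Fin (m + 3)).succAbove 0 = 0 :=
          Fin.ext (by rw [succAbove_val]; unfold skf; simp)
        rw [h0]
        rfl
      | succ a =>
        induction a using Fin.cases with
        | zero =>
          have hv : (((t.succ.succ : Fin (m + 3)).succAbove (Fin.succ (0 : Fin (m + 1)))) : ℕ)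
              = 1 := by
            rw [succAbove_val]; unfold skf; simp
          rw [show uT c α m = Fin.cons (erow1 m) (Fin.cons (erow2 m)
            (fun tt : Fin (m + 1) => wrow c α m tt)) from rfl]
          rw [cons_val_succ _ _ _ 0 hv (by omega)]
          rw [cons_val_zero' _ _ _ rfl]
          rw [Fin.cons_succ, Fin.cons_zero]
        | succ b =>
          have hb := b.isLt
          have hv : (((t.succ.succ : Fin (m + 3)).succAbove b.succ.succ) : ℕ)
              = skf t b + 2 := by
            rw [succAbove_val]; unfold skf; simp only [Fin.val_succ]; split_ifs <;> omega
          rw [show uT c α m = Fin.cons (erow1 m) (Fin.cons (erow2 m)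
            (fun tt : Fin (m + 1) => wrow c α m tt)) from rfl]
          rw [cons_val_succ _ _ _ (skf t b + 1) (by omega) (by unfold skf; split_ifs <;> omega)]
          rw [cons_val_succ _ _ _ (skf t b) rfl (by unfold skf; split_ifs <;> omega)]
          rw [Fin.cons_succ, Fin.cons_succ]
    rw [he]
    rfl
  have hsum : (∑ i : Fin (m + 1), (-1 : R) ^ ((i.succ.succ : Fin (m + 3)) : ℕ) *
      Matrix.det (Matrix.of fun r s : Fin (m + 2) => uT c α m ((i.succ.succ).succAbove r) s) *
      LT c m k (uT c α m i.succ.succ))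
      = ∑ t ∈ Finset.range (m + 1), (-1 : R) ^ t * PsiCol c α m t *
          (α * LvT c m k t + LvT c m k (t + 1)) := by
    rw [← Fin.sum_univ_eq_sum_range (fun t => (-1 : R) ^ t * PsiCol c α m t *
      (α * LvT c m k t + LvT c m k (t + 1))) (m + 1)]
    refine Finset.sum_congr rfl fun t _ => ?_
    show _ = (-1 : R) ^ (t : ℕ) * PsiCol c α m t * (α * LvT c m k t + LvT c m k ((t : ℕ) + 1))
    rw [hdetT t, huT t, Lw c α m k t]
    rw [show ((t.succ.succ : Fin (m + 3)) : ℕ) = (t : ℕ) + 2 from by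
      simp only [Fin.val_succ]]
    rw [show ((-1 : R) ^ ((t : ℕ) + 2)) = (-1 : R) ^ (t : ℕ) from by
      rw [pow_add, neg_one_sq, mul_one]]
  rw [hdet0, hu0, Le1, hu1, Le2, mul_zero, zero_add, hsum] at SZ
  simp only [Fin.val_zero, pow_zero, one_mul] at SZ
  have hsplit : ∑ t ∈ Finset.range (m + 1), (-1 : R) ^ t * PsiCol c α m t *
      (α * LvT c m k t + LvT c m k (t + 1))
      = α * ∑ t ∈ Finset.range (m + 1), (-1 : R) ^ t * PsiCol c α m t * LvT c m k t
        + ∑ t ∈ Finset.range (m + 1), (-1 : R) ^ t * PsiCol c α m t * LvT c m k (t + 1) := by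
    rw [Finset.mul_sum, ← Finset.sum_add_distrib]
    exact Finset.sum_congr rfl fun t _ => by ring
  have hS1 : ∑ t ∈ Finset.range (m + 1), (-1 : R) ^ t * PsiCol c α m t * LvT c m k t
      = (-1) ^ k * PsiCol c α m k * LvT c m k k := by
    refine Finset.sum_eq_single_of_mem k (Finset.mem_range.mpr (by omega)) ?_
    intro t ht hne
    rw [Lv_zero c m k hk t (by have := Finset.mem_range.mp ht; omega) hne
      (by have := Finset.mem_range.mp ht; omega), mul_zero]
  have hS2 : ∑ t ∈ Finset.range (m + 1), (-1 : R) ^ t * PsiCol c α m t * LvT c m k (t + 1)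
      = (if k = 0 then 0 else (-1) ^ (k - 1) * PsiCol c α m (k - 1) * LvT c m k k)
        + (-1) ^ m * PsiCol c α m m * LvT c m k (m + 1) := by
    rw [Finset.sum_range_succ]
    have hinner : ∑ t ∈ Finset.range m, (-1 : R) ^ t * PsiCol c α m t * LvT c m k (t + 1)
        = (if k = 0 then 0 else (-1) ^ (k - 1) * PsiCol c α m (k - 1) * LvT c m k k) := by
      by_cases hk0 : k = 0
      · rw [if_pos hk0]
        refine Finset.sum_eq_zero fun t ht => ?_
        rw [Lv_zero c m k hk (t + 1) (by have := Finset.mem_range.mp ht; omega) (by omega)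
          (by have := Finset.mem_range.mp ht; omega), mul_zero]
      · rw [if_neg hk0]
        rw [Finset.sum_eq_single_of_mem (k - 1) (Finset.mem_range.mpr (by omega)) ?_]
        · rw [show k - 1 + 1 = k from by omega]
        · intro t ht hne
          rw [Lv_zero c m k hk (t + 1) (by have := Finset.mem_range.mp ht; omega) (by omega)
            (by have := Finset.mem_range.mp ht; omega), mul_zero]
    rw [hinner]
  rw [hsplit, hS1, hS2, Lv_k c m k hk, Lv_last c m k hk] at SZ
  have h1 : (-1 : R) ^ k * (-1 : R) ^ (k + 1) = -1 := by
    rw [pow_succ, ← mul_assoc, neg_one_pow_mul_self, one_mul]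
  have h3 : (-1 : R) ^ m * (-1 : R) ^ (m + 1) = -1 := by
    rw [pow_succ, ← mul_assoc, neg_one_pow_mul_self, one_mul]
  by_cases hk0 : k = 0
  · rw [if_pos hk0] at SZ
    rw [if_pos hk0]
    linear_combination (-1 : R) * SZ
      + (PsiCol c α m m * ACol c m k) * h3
      + (α * PsiCol c α m k * ACol c m (m + 1)) * h1
  · rw [if_neg hk0] at SZ
    rw [if_neg hk0]
    have h2 : (-1 : R) ^ (k - 1) * (-1 : R) ^ (k + 1) = 1 := by
      rw [show k + 1 = (k - 1) + 2 from by omega, pow_add, ← mul_assoc,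
        neg_one_pow_mul_self, one_mul, neg_one_sq]
    linear_combination (-1 : R) * SZ
      + (PsiCol c α m m * ACol c m k) * h3
      + (α * PsiCol c α m k * ACol c m (m + 1)) * h1
      + (PsiCol c α m (k - 1) * ACol c m (m + 1)) * h2

section VSpace2
variable {M : Type*} [AddCommGroup M] [Module R M]
/-- expansion of an alternating map applied to the pattern `x•u_j + u_{j+1}`. -/
theorem alt_pattern_expand :
    ∀ (q : ℕ) (f : M [⋀^Fin q]→ₗ[R] R) (u : ℕ → M) (x : R),
      f (fun j : Fin q => x • u j + u (j + 1)) =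
        ∑ k ∈ Finset.range (q + 1), x ^ k • f (fun j : Fin q => u (skf k j)) := by
  intro q
  induction q with
  | zero =>
    intro f u x
    rw [Finset.sum_range_one]
    simp only [pow_zero, one_smul]
    congr 1
    funext j
    exact j.elim0
  | succ q ih =>
    intro f u x
    have hc : ∀ (y : M) (t : Fin q → M), f (Fin.cons y t) = (f.curryLeft y) t := fun y t => rfl
    have h0 : (fun j : Fin (q + 1) => x • u j + u (j + 1)) =
        Fin.cons (x • u 0 + u 1) (fun j : Fin q => x • u (j + 1) + u (j + 1 + 1)) := by
      funext j
      induction j using Fin.cases with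
      | zero => simp
      | succ t => simp [Fin.cons_succ, Fin.val_succ]
    rw [h0, hc, map_add, LinearMap.map_smul, AlternatingMap.add_apply, AlternatingMap.smul_apply]
    have ih0 : (f.curryLeft (u 0)) (fun j : Fin q => x • u (j + 1) + u (j + 1 + 1)) =
        ∑ k ∈ Finset.range (q + 1),
          x ^ k • (f.curryLeft (u 0)) (fun j : Fin q => u (skf k j + 1)) :=
      ih (f.curryLeft (u 0)) (fun t => u (t + 1)) x
    have ih1 : (f.curryLeft (u 1)) (fun j : Fin q => x • u (j + 1) + u (j + 1 + 1)) =
        ∑ k ∈ Finset.range (q + 1),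
          x ^ k • (f.curryLeft (u 1)) (fun j : Fin q => u (skf k j + 1)) :=
      ih (f.curryLeft (u 1)) (fun t => u (t + 1)) x
    rw [ih0, ih1]
    have e0 : ∀ k : ℕ, (f.curryLeft (u 0)) (fun j : Fin q => u (skf k j + 1)) =
        f (fun j : Fin (q + 1) => u (skf (k + 1) j)) := by
      intro k
      rw [← hc]
      congr 1
      funext j
      induction j using Fin.cases with
      | zero =>
        simp only [Fin.cons_zero, Fin.val_zero, skf]
        norm_num
      | succ t =>
        simp only [Fin.cons_succ, Fin.val_succ, skf]
        congr 1
        split_ifs <;> omega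
    have hS0 : x • ∑ k ∈ Finset.range (q + 1),
          x ^ k • (f.curryLeft (u 0)) (fun j : Fin q => u (skf k j + 1)) =
        ∑ k ∈ Finset.range (q + 1),
          x ^ (k + 1) • f (fun j : Fin (q + 1) => u (skf (k + 1) j)) := by
      rw [Finset.smul_sum]
      refine Finset.sum_congr rfl fun k _ => ?_
      rw [e0 k, smul_smul, ← pow_succ']
    have hS1 : ∑ k ∈ Finset.range (q + 1),
          x ^ k • (f.curryLeft (u 1)) (fun j : Fin q => u (skf k j + 1)) =
        x ^ 0 • f (fun j : Fin (q + 1) => u (skf 0 j)) := by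
      rw [Finset.sum_range_succ']
      have hz : ∀ k ∈ Finset.range q,
          x ^ (k + 1) • (f.curryLeft (u 1)) (fun j : Fin q => u (skf (k + 1) j + 1)) = 0 := by
        intro k hk
        have hq : 0 < q := Nat.pos_of_ne_zero (by rintro rfl; simpa using hk)
        rw [← hc]
        have hval : (Fin.cons (u 1) (fun j : Fin q => u (skf (k + 1) j + 1)) : Fin (q+1) → M) 0
            = (Fin.cons (u 1) (fun j : Fin q => u (skf (k + 1) j + 1)) : Fin (q+1) → M) ⟨1, by omega⟩ := by
          have h1 : (⟨1, by omega⟩ : Fin (q + 1)) = Fin.succ ⟨0, hq⟩ := rfl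
          rw [h1, Fin.cons_succ, Fin.cons_zero]
          simp [skf]
        rw [AlternatingMap.map_eq_zero_of_eq _ _ hval (by simp [Fin.ext_iff]), smul_zero]
      rw [Finset.sum_eq_zero hz, zero_add, ← hc]
      congr 2
      funext j
      induction j using Fin.cases with
      | zero => simp [skf]
      | succ t => simp [Fin.cons_succ, Fin.val_succ, skf]
    rw [hS0, hS1]
    exact (Finset.sum_range_succ' (fun k => x ^ k • f fun j : Fin (q + 1) => u (skf k j)) (q + 1)).symm


end VSpace2

theorem det_cons_indicator {p : ℕ} (pv : ℕ) (hpv : pv < p + 1) (rows : Fin p → Fin (p + 1) → R) :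
    Matrix.det (Matrix.of (Fin.cons (fun t : Fin (p + 1) => if (t : ℕ) = pv then (1 : R) else 0)
        rows)) =
      (-1 : R) ^ pv *
        Matrix.det (Matrix.of fun i j : Fin p =>
          rows i ((⟨pv, hpv⟩ : Fin (p + 1)).succAbove j)) := by
  rw [Matrix.det_succ_row_zero]
  rw [Finset.sum_eq_single (⟨pv, hpv⟩ : Fin (p + 1))]
  · have hsub : (Matrix.of (Fin.cons (fun t : Fin (p + 1) => if (t : ℕ) = pv then (1 : R) else 0)
        rows)).submatrix Fin.succ (⟨pv, hpv⟩ : Fin (p + 1)).succAbove =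
        Matrix.of fun i j : Fin p => rows i ((⟨pv, hpv⟩ : Fin (p + 1)).succAbove j) := by
      ext a b
      simp [Fin.cons_succ]
    rw [hsub]
    simp [Fin.cons_zero]
  · intro b _ hb
    have hb' : (b : ℕ) ≠ pv := by rw [ne_eq, Fin.ext_iff] at hb; exact hb
    simp [Fin.cons_zero, hb']
  · intro h
    exact absurd (Finset.mem_univ _) h

theorem f2_eq_det (m : ℕ) (s : Fin m → Fin (m + 2) → R) :
    f2 m s = Matrix.det (Matrix.of fun i j : Fin m => s i ⟨j, by omega⟩) := by
  rw [f2_apply]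
  show Matrix.det (Matrix.of (Fin.cons (erow1 m) (Fin.cons (erow2 m) s))) = _
  have h1 : erow1 (R := R) m = fun t : Fin (m + 2) => if (t : ℕ) = m then (1 : R) else 0 := rfl
  rw [h1, det_cons_indicator m (by omega)]
  have hre : (Matrix.of fun (i : Fin (m + 1)) (j : Fin (m + 1)) =>
      (Fin.cons (erow2 m) s : Fin (m + 1) → Fin (m + 2) → R) i
        ((⟨m, by omega⟩ : Fin (m + 2)).succAbove j)) =
      Matrix.of (Fin.cons (fun j : Fin (m + 1) => if (j : ℕ) = m then (1 : R) else 0)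
        (fun (i : Fin m) (j : Fin (m + 1)) =>
          s i ((⟨m, by omega⟩ : Fin (m + 2)).succAbove j))) := by
    ext i j
    induction i using Fin.cases with
    | zero =>
      simp only [Matrix.of_apply, Fin.cons_zero, erow2, succAbove_val]
      unfold skf
      have := j.isLt
      split_ifs <;> first | rfl | omega
    | succ t => simp [Fin.cons_succ]
  rw [hre, det_cons_indicator m (by omega)]
  rw [← mul_assoc, neg_one_pow_mul_self, one_mul]
  congr 1
  ext i j
  simp only [Matrix.of_apply]
  congr 1
  apply Fin.ext
  rw [succAbove_val, succAbove_val]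
  unfold skf
  simp only [Fin.val_mk]
  have := j.isLt
  split_ifs <;> omega

theorem g1_eq_det (m : ℕ) (s : Fin (m + 1) → Fin (m + 2) → R) :
    g1 m s = (-1 : R) ^ (m + 1) *
      Matrix.det (Matrix.of fun i j : Fin (m + 1) => s i ⟨j, by omega⟩) := by
  rw [g1_apply]
  show Matrix.det (Matrix.of (Fin.cons (erow2 m) s)) = _
  have h1 : erow2 (R := R) m = fun t : Fin (m + 2) => if (t : ℕ) = m + 1 then (1 : R) else 0 := rfl
  rw [h1, det_cons_indicator (m + 1) (by omega)]
  congr 1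
  congr 1
  ext i j
  simp only [Matrix.of_apply]
  congr 1
  apply Fin.ext
  rw [succAbove_val]
  unfold skf
  simp only [Fin.val_mk]
  have := j.isLt
  split_ifs <;> omega

lemma det_eq_g1 (m : ℕ) (s : Fin (m + 1) → Fin (m + 2) → R) :
    Matrix.det (Matrix.of fun i j : Fin (m + 1) => s i ⟨j, by omega⟩) =
      (-1 : R) ^ (m + 1) * g1 m s := by
  rw [g1_eq_det, ← mul_assoc, neg_one_pow_mul_self, one_mul]

theorem bracket_main (c : ℕ → R) (α β : R) (m : ℕ) :
    (β - α) * ((∑ k ∈ Finset.range (m + 1), β ^ k * PsiCol c α m k) * ACol c m (m + 1)) =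
      PsiCol c α m m * (∑ l ∈ Finset.range (m + 2), β ^ l * ACol c m l)
        - (∑ k ∈ Finset.range (m + 1), β ^ k * BCol c m k) * PhiCol c α m := by
  have E1 : PsiCol c α m m * (∑ l ∈ Finset.range (m + 1), β ^ l * ACol c m l)
      = PhiCol c α m * (∑ l ∈ Finset.range (m + 1), β ^ l * BCol c m l)
        - α * (∑ l ∈ Finset.range (m + 1), β ^ l * (PsiCol c α m l * ACol c m (m + 1)))
        + ∑ l ∈ Finset.range (m + 1), β ^ l *
            (if l = 0 then 0 else PsiCol c α m (l - 1) * ACol c m (m + 1)) := by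
    rw [Finset.mul_sum, Finset.mul_sum, Finset.mul_sum, ← Finset.sum_sub_distrib,
      ← Finset.sum_add_distrib]
    refine Finset.sum_congr rfl fun l hl => ?_
    have hTk := TkMain c α m l (by have := Finset.mem_range.mp hl; omega)
    linear_combination (β ^ l) * hTk
  have E2 : ∑ l ∈ Finset.range (m + 1), β ^ l *
        (if l = 0 then 0 else PsiCol c α m (l - 1) * ACol c m (m + 1))
      = ∑ l ∈ Finset.range m, β ^ (l + 1) * (PsiCol c α m l * ACol c m (m + 1)) := by
    rw [Finset.sum_range_succ']
    simp only [Nat.add_sub_cancel, Nat.succ_ne_zero, if_neg, if_pos rfl, ite_true, eq_self_iff_true, mul_zero, add_zero,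
      reduceCtorEq, ite_false]
  have E3 : (∑ l ∈ Finset.range m, β ^ (l + 1) * (PsiCol c α m l * ACol c m (m + 1)))
        + β ^ (m + 1) * (PsiCol c α m m * ACol c m (m + 1))
      = ∑ l ∈ Finset.range (m + 1), β ^ (l + 1) * (PsiCol c α m l * ACol c m (m + 1)) :=
    (Finset.sum_range_succ _ m).symm
  have E4a : ∑ l ∈ Finset.range (m + 1), β ^ (l + 1) * (PsiCol c α m l * ACol c m (m + 1))
      = β * ((∑ k ∈ Finset.range (m + 1), β ^ k * PsiCol c α m k) * ACol c m (m + 1)) := by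
    rw [Finset.sum_mul, Finset.mul_sum]
    refine Finset.sum_congr rfl fun l _ => ?_
    rw [pow_succ]
    ring
  have E4b : ∑ l ∈ Finset.range (m + 1), β ^ l * (PsiCol c α m l * ACol c m (m + 1))
      = (∑ k ∈ Finset.range (m + 1), β ^ k * PsiCol c α m k) * ACol c m (m + 1) := by
    rw [Finset.sum_mul]
    exact Finset.sum_congr rfl fun l _ => by ring
  rw [Finset.sum_range_succ (fun l => β ^ l * ACol c m l) (m + 1)]
  linear_combination (-1 : R) * E1 - E2 - E3 - E4a + α * E4b

end HankelAux

open Matrix in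
theorem hankel_condensation_identity {R : Type*} [CommRing R] (c : ℕ → R) (α β : R)
    (n : ℕ) (hn : 0 < n) :
    (β - α) *
        det (of fun i j : Fin (n - 1) =>
          α * β * c (i.val + j.val) + (α + β) * c (i.val + j.val + 1) + c (i.val + j.val + 2)) *
        det (of fun i j : Fin n => c (i.val + j.val)) =
      det (of fun i j : Fin (n - 1) => α * c (i.val + j.val) + c (i.val + j.val + 1)) *
        det (of fun i j : Fin n => β * c (i.val + j.val) + c (i.val + j.val + 1)) -
      det (of fun i j : Fin (n - 1) => β * c (i.val + j.val) + c (i.val + j.val + 1)) *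
        det (of fun i j : Fin n => α * c (i.val + j.val) + c (i.val + j.val + 1)) := by
  obtain ⟨m, rfl⟩ : ∃ m, n = m + 1 := ⟨n - 1, by omega⟩
  show (β - α) *
        det (of fun i j : Fin m =>
          α * β * c (i.val + j.val) + (α + β) * c (i.val + j.val + 1) + c (i.val + j.val + 2)) *
        det (of fun i j : Fin (m + 1) => c (i.val + j.val)) =
      det (of fun i j : Fin m => α * c (i.val + j.val) + c (i.val + j.val + 1)) *
        det (of fun i j : Fin (m + 1) => β * c (i.val + j.val) + c (i.val + j.val + 1)) -
      det (of fun i j : Fin m => β * c (i.val + j.val) + c (i.val + j.val + 1)) *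
        det (of fun i j : Fin (m + 1) => α * c (i.val + j.val) + c (i.val + j.val + 1))
  have hskm : ∀ i : Fin m, HankelAux.skf m i.val = i.val := fun i => by
    unfold HankelAux.skf; rw [if_pos i.isLt]
  have hskm1 : ∀ i : Fin (m + 1), HankelAux.skf (m + 1) i.val = i.val := fun i => by
    unfold HankelAux.skf; rw [if_pos i.isLt]
  have hDd : det (of fun i j : Fin m =>
      α * β * c (i.val + j.val) + (α + β) * c (i.val + j.val + 1) + c (i.val + j.val + 2)) =
      ∑ k ∈ Finset.range (m + 1), β ^ k * HankelAux.PsiCol c α m k := by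
    have hm : (Matrix.of fun i j : Fin m =>
        α * β * c (i.val + j.val) + (α + β) * c (i.val + j.val + 1) + c (i.val + j.val + 2)) =
        (Matrix.of fun i j : Fin m =>
          (fun jj : Fin m => β • HankelAux.wrow c α m jj + HankelAux.wrow c α m (jj + 1)) i
            ⟨j.val, by omega⟩) := by
      ext i j
      simp only [Matrix.of_apply, HankelAux.wrow, HankelAux.vrow, Pi.add_apply, Pi.smul_apply,
        smul_eq_mul, Fin.val_mk]
      rw [show i.val + 1 + j.val = i.val + j.val + 1 from by omega,
        show i.val + 1 + 1 + j.val = i.val + j.val + 2 from by omega]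
      ring
    rw [hm, ← HankelAux.f2_eq_det]
    have hexp : HankelAux.f2 (R := R) m
        (fun j : Fin m => β • HankelAux.wrow c α m j + HankelAux.wrow c α m (j + 1)) =
        ∑ k ∈ Finset.range (m + 1), β ^ k •
          HankelAux.f2 m (fun j : Fin m => HankelAux.wrow c α m (HankelAux.skf k j)) :=
      HankelAux.alt_pattern_expand m (HankelAux.f2 m) (fun t => HankelAux.wrow c α m t) β
    rw [hexp]
    exact Finset.sum_congr rfl fun k _ => by rw [smul_eq_mul]; rfl
  have hPsiB : det (of fun i j : Fin m => β * c (i.val + j.val) + c (i.val + j.val + 1)) =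
      ∑ k ∈ Finset.range (m + 1), β ^ k * HankelAux.BCol c m k := by
    have hm : (Matrix.of fun i j : Fin m => β * c (i.val + j.val) + c (i.val + j.val + 1)) =
        (Matrix.of fun i j : Fin m =>
          (fun jj : Fin m => β • HankelAux.vrow c m jj + HankelAux.vrow c m (jj + 1)) i
            ⟨j.val, by omega⟩) := by
      ext i j
      simp only [Matrix.of_apply, HankelAux.vrow, Pi.add_apply, Pi.smul_apply,
        smul_eq_mul, Fin.val_mk]
      rw [show i.val + 1 + j.val = i.val + j.val + 1 from by omega]
    rw [hm, ← HankelAux.f2_eq_det]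
    have hexp : HankelAux.f2 (R := R) m
        (fun j : Fin m => β • HankelAux.vrow c m j + HankelAux.vrow c m (j + 1)) =
        ∑ k ∈ Finset.range (m + 1), β ^ k •
          HankelAux.f2 m (fun j : Fin m => HankelAux.vrow c m (HankelAux.skf k j)) :=
      HankelAux.alt_pattern_expand m (HankelAux.f2 m) (fun t => HankelAux.vrow c m t) β
    rw [hexp]
    exact Finset.sum_congr rfl fun k _ => by rw [smul_eq_mul]; rfl
  have hPsiA : det (of fun i j : Fin m => α * c (i.val + j.val) + c (i.val + j.val + 1)) =
      HankelAux.PsiCol c α m m := by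
    have hm : (Matrix.of fun i j : Fin m => α * c (i.val + j.val) + c (i.val + j.val + 1)) =
        (Matrix.of fun i j : Fin m =>
          (fun jj : Fin m => HankelAux.wrow c α m (HankelAux.skf m jj)) i ⟨j.val, by omega⟩) := by
      ext i j
      simp only [Matrix.of_apply, hskm, HankelAux.wrow, HankelAux.vrow, Pi.add_apply,
        Pi.smul_apply, smul_eq_mul, Fin.val_mk]
      rw [show i.val + 1 + j.val = i.val + j.val + 1 from by omega]
    rw [hm, ← HankelAux.f2_eq_det]
    rfl
  have hH : det (of fun i j : Fin (m + 1) => c (i.val + j.val)) =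
      (-1 : R) ^ (m + 1) * HankelAux.ACol c m (m + 1) := by
    have hm : (Matrix.of fun i j : Fin (m + 1) => c (i.val + j.val)) =
        (Matrix.of fun i j : Fin (m + 1) =>
          (fun ii : Fin (m + 1) => HankelAux.vrow c m (HankelAux.skf (m + 1) ii)) i
            ⟨j.val, by omega⟩) := by
      ext i j
      simp only [Matrix.of_apply, hskm1, HankelAux.vrow, Fin.val_mk]
    rw [hm, HankelAux.det_eq_g1]
    rfl
  have hPhiA : det (of fun i j : Fin (m + 1) => α * c (i.val + j.val) + c (i.val + j.val + 1)) =
      (-1 : R) ^ (m + 1) * HankelAux.PhiCol c α m := by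
    have hm : (Matrix.of fun i j : Fin (m + 1) => α * c (i.val + j.val) + c (i.val + j.val + 1)) =
        (Matrix.of fun i j : Fin (m + 1) =>
          (fun ii : Fin (m + 1) => HankelAux.wrow c α m ii) i ⟨j.val, by omega⟩) := by
      ext i j
      simp only [Matrix.of_apply, HankelAux.wrow, HankelAux.vrow, Pi.add_apply,
        Pi.smul_apply, smul_eq_mul, Fin.val_mk]
      rw [show i.val + 1 + j.val = i.val + j.val + 1 from by omega]
    rw [hm, HankelAux.det_eq_g1]
    rfl
  have hPhiB : det (of fun i j : Fin (m + 1) => β * c (i.val + j.val) + c (i.val + j.val + 1)) =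
      (-1 : R) ^ (m + 1) * ∑ l ∈ Finset.range (m + 2), β ^ l * HankelAux.ACol c m l := by
    have hm : (Matrix.of fun i j : Fin (m + 1) => β * c (i.val + j.val) + c (i.val + j.val + 1)) =
        (Matrix.of fun i j : Fin (m + 1) =>
          (fun ii : Fin (m + 1) => β • HankelAux.vrow c m ii + HankelAux.vrow c m (ii + 1)) i
            ⟨j.val, by omega⟩) := by
      ext i j
      simp only [Matrix.of_apply, HankelAux.vrow, Pi.add_apply, Pi.smul_apply, smul_eq_mul,
        Fin.val_mk]
      rw [show i.val + 1 + j.val = i.val + j.val + 1 from by omega]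
    rw [hm, HankelAux.det_eq_g1]
    have hexp : HankelAux.g1 (R := R) m
        (fun j : Fin (m + 1) => β • HankelAux.vrow c m j + HankelAux.vrow c m (j + 1)) =
        ∑ l ∈ Finset.range (m + 2), β ^ l •
          HankelAux.g1 m (fun j : Fin (m + 1) => HankelAux.vrow c m (HankelAux.skf l j)) :=
      HankelAux.alt_pattern_expand (m + 1) (HankelAux.g1 m) (fun t => HankelAux.vrow c m t) β
    rw [hexp]
    try congr 1
    try exact Finset.sum_congr rfl fun l _ => by rw [smul_eq_mul]; rfl
  rw [hDd, hH, hPsiA, hPhiB, hPsiB, hPhiA]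
  linear_combination ((-1 : R) ^ (m + 1)) * HankelAux.bracket_main c α β m
end

section
/- Let L be a linear functional on polynomials with moments ν_n such that all Hankel determinants det_{0≤i,j≤n}(ν_{i+j}) are nonzero. Then the polynomials Q_n(x) = det_{0≤i,j≤n−1}(ν_{i+j+1} − ν_{i+j} x) form a sequence of orthogonal polynomials with respect to L, i.e., L(Q_m Q_n) = 0 for m ≠ n and L(Q_n²) ≠ 0. -/
/-!
Subtracting `X` times each column from the next one turns the bordered Hankel determinant
`P n = det (ν (i + j) for rows i < n; last row 1, X, …, X ^ n)` into a matrix with last row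
`(1, 0, …, 0)`, so `Q n = (-1) ^ n * P n`. Only the last row of `P n` involves `X`, so by
linearity `L (X ^ k * P n)` is the Hankel determinant with last row replaced by `(ν (k + j))_j`:
it vanishes for `k < n` (two equal rows) and is the Hankel determinant of order `n + 1` for
`k = n`. Since `Q n` has degree at most `n` with leading coefficient `± det (ν (i + j))_{i,j<n}`,
this gives orthogonality and `L (Q n ^ 2) ≠ 0`.
-/

open Polynomial Matrix

namespace Matrix

variable {R : Type*} [CommRing R]

theorem det_of_sub_mul_prev_col {n : ℕ} (A : Matrix (Fin (n + 1)) (Fin (n + 1)) R) (x : R) :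
    det (of fun i j => Fin.cases (A i 0) (fun j' => A i j'.succ - x * A i j'.castSucc) j) =
      det A := by
  set S : Matrix (Fin (n + 1)) (Fin (n + 1)) R :=
    of fun k j => Fin.cases 0 (fun j' => if k = j'.castSucc then 1 else 0) j
  have hAS : (of fun i j => Fin.cases (A i 0) (fun j' => A i j'.succ - x * A i j'.castSucc) j :
      Matrix (Fin (n + 1)) (Fin (n + 1)) R) = A * (1 - x • S) := by
    rw [Matrix.mul_sub, Matrix.mul_one, Matrix.mul_smul]
    ext i j
    cases j using Fin.cases <;> simp [S, Matrix.mul_apply]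
  have hS : det (1 - x • S) = 1 := by
    rw [det_of_isUpperTriangular]
    · refine Finset.prod_eq_one fun k _ => ?_
      cases k using Fin.cases <;> simp [S, Fin.castSucc_lt_succ.ne']
    · intro k j (hjk : j < k)
      cases j using Fin.cases with
      | zero => simp [S, one_apply_ne hjk.ne']
      | succ j => simp [S, one_apply_ne hjk.ne', (Fin.castSucc_lt_succ.trans hjk).ne']
  rw [hAS, det_mul, hS, mul_one]

def hankel (ν : ℕ → R) (n : ℕ) : Matrix (Fin n) (Fin n) R :=
  of fun i j => ν (i + j)

end Matrix

theorem LinearMap.map_det_updateRow_map_algebraMap {R A : Type*} [CommRing R] [CommRing A]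
    [Algebra R A] {n : ℕ} (φ : A →ₗ[R] R) (M : Matrix (Fin (n + 1)) (Fin (n + 1)) R)
    (r : Fin (n + 1)) (v : Fin (n + 1) → A) :
    φ (det (updateRow (M.map (algebraMap R A)) r v)) = det (updateRow M r fun j => φ (v j)) := by
  rw [det_succ_row _ r, det_succ_row _ r, map_sum]
  refine Finset.sum_congr rfl fun j _ => ?_
  rw [submatrix_updateRow_succAbove, submatrix_updateRow_succAbove, submatrix_map, updateRow_self,
    updateRow_self, ← RingHom.mapMatrix_apply, ← RingHom.map_det]
  set d := det (M.submatrix r.succAbove j.succAbove)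
  have hsmul : (-1 : A) ^ ((r : ℕ) + j) * v j * algebraMap R A d =
      ((-1) ^ ((r : ℕ) + j) * d) • v j := by
    rw [Algebra.smul_def, map_mul, map_pow, map_neg, map_one]
    ring
  rw [hsmul, map_smul, smul_eq_mul]
  ring

theorem LinearMap.map_mul_eq_coeff_mul {R : Type*} [CommRing R] (L : R[X] →ₗ[R] R)
    {p q : R[X]} {n : ℕ} (hp : p.natDegree ≤ n) (hq : ∀ k < n, L (X ^ k * q) = 0) :
    L (p * q) = p.coeff n * L (X ^ n * q) := by
  have hterm : ∀ k, L (C (p.coeff k) * X ^ k * q) = p.coeff k * L (X ^ k * q) := fun k => by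
    rw [mul_assoc, ← smul_eq_C_mul, map_smul, smul_eq_mul]
  conv_lhs => rw [p.as_sum_range_C_mul_X_pow' (Nat.lt_succ_of_le hp)]
  rw [Finset.sum_range_succ, add_mul, Finset.sum_mul, map_add, map_sum, hterm,
    Finset.sum_eq_zero fun k hk => by rw [hterm, hq k (Finset.mem_range.mp hk), mul_zero],
    zero_add]

namespace Polynomial

variable {R : Type*} [CommRing R]

noncomputable def borderedHankelDet (ν : ℕ → R) (n : ℕ) : R[X] :=
  det (updateRow ((hankel ν (n + 1)).map C) (Fin.last n) fun j => X ^ (j : ℕ))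

noncomputable def hankelPencilDet (ν : ℕ → R) (n : ℕ) : R[X] :=
  det (of fun i j : Fin n => C (ν (i + j + 1)) - C (ν (i + j)) * X)

theorem hankelPencilDet_eq (ν : ℕ → R) (n : ℕ) :
    hankelPencilDet ν n = (-1) ^ n * borderedHankelDet ν n := by
  rw [borderedHankelDet, ← det_of_sub_mul_prev_col _ X, det_succ_row _ (Fin.last n),
    Fin.sum_univ_succ, Finset.sum_eq_zero fun j _ => by simp [pow_succ, mul_comm], add_zero]
  simp only [Fin.val_last, Fin.val_zero, add_zero, Fin.succAbove_last, Fin.succAbove_zero, of_apply,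
    Fin.cases_zero, updateRow_self, pow_zero, mul_one, ← mul_assoc, ← pow_add,
    Even.neg_one_pow ⟨n, rfl⟩, one_mul, hankelPencilDet]
  congr 1
  ext i j : 1
  simp [hankel, Fin.castSucc_ne_last, add_assoc]

theorem hankelPencilDet_eq_det_X_smul_add (ν : ℕ → R) (n : ℕ) :
    hankelPencilDet ν n =
      det ((X : R[X]) • (-hankel ν n).map C + (hankel (fun m => ν (m + 1)) n).map C) := by
  rw [hankelPencilDet]
  congr 1
  ext i j : 1
  simp [hankel, sub_eq_neg_add]

theorem natDegree_hankelPencilDet_le (ν : ℕ → R) (n : ℕ) :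
    (hankelPencilDet ν n).natDegree ≤ n := by
  rw [hankelPencilDet_eq_det_X_smul_add]
  simpa using natDegree_det_X_add_C_le (-hankel ν n) (hankel (fun m => ν (m + 1)) n)

theorem coeff_hankelPencilDet (ν : ℕ → R) (n : ℕ) :
    (hankelPencilDet ν n).coeff n = (-1) ^ n * det (hankel ν n) := by
  rw [hankelPencilDet_eq_det_X_smul_add]
  simpa [det_neg] using coeff_det_X_add_C_card (-hankel ν n) (hankel (fun m => ν (m + 1)) n)

section Moments

variable (L : R[X] →ₗ[R] R)

theorem map_X_pow_mul_borderedHankelDet (n k : ℕ) :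
    L (X ^ k * borderedHankelDet (fun m => L (X ^ m)) n) =
      det (updateRow (hankel (fun m => L (X ^ m)) (n + 1)) (Fin.last n)
        fun j => L (X ^ (k + j))) := by
  rw [borderedHankelDet, ← det_updateRow_smul, ← algebraMap_eq,
    LinearMap.map_det_updateRow_map_algebraMap]
  simp only [Pi.smul_apply, smul_eq_mul, pow_add]

theorem map_X_pow_mul_borderedHankelDet_of_lt {n k : ℕ} (hk : k < n) :
    L (X ^ k * borderedHankelDet (fun m => L (X ^ m)) n) = 0 := by
  rw [map_X_pow_mul_borderedHankelDet]
  exact det_updateRow_eq_zero (M := hankel (fun m => L (X ^ m)) (n + 1))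
    (i := ⟨k, hk.trans n.lt_succ_self⟩) (j := Fin.last n) (Fin.ne_of_val_ne hk.ne)

theorem map_X_pow_self_mul_borderedHankelDet (n : ℕ) :
    L (X ^ n * borderedHankelDet (fun m => L (X ^ m)) n) =
      det (hankel (fun m => L (X ^ m)) (n + 1)) := by
  rw [map_X_pow_mul_borderedHankelDet]
  exact congrArg det (updateRow_eq_self _ (Fin.last n))

theorem map_X_pow_mul_hankelPencilDet (n k : ℕ) :
    L (X ^ k * hankelPencilDet (fun m => L (X ^ m)) n) =
      (-1) ^ n * L (X ^ k * borderedHankelDet (fun m => L (X ^ m)) n) := by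
  rw [hankelPencilDet_eq, mul_left_comm, ← C_1, ← C_neg, ← C_pow, ← smul_eq_C_mul, map_smul,
    smul_eq_mul]

end Moments

end Polynomial

open Polynomial Matrix in
theorem orthogonal_polynomials_from_moments_second_form_general {K : Type*} [Field K]
    (L : Polynomial K →ₗ[K] K) (ν : ℕ → K) (hν : ∀ n, ν n = L (X ^ n))
    (hH : ∀ n : ℕ, det (of fun i j : Fin (n + 1) => ν (i.val + j.val)) ≠ 0)
    (Q : ℕ → Polynomial K)
    (hQ : ∀ n, Q n =
      det (of fun i j : Fin n => C (ν (i.val + j.val + 1)) - C (ν (i.val + j.val)) * X)) :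
    (∀ m n, m ≠ n → L (Q m * Q n) = 0) ∧ (∀ n, L (Q n ^ 2) ≠ 0) := by
  obtain rfl : ν = fun n => L (X ^ n) := funext hν
  obtain rfl : Q = hankelPencilDet fun n => L (X ^ n) := funext hQ
  have horth : ∀ {n k}, k < n → L (X ^ k * hankelPencilDet (fun m => L (X ^ m)) n) = 0 :=
    fun hk => by
      rw [map_X_pow_mul_hankelPencilDet, map_X_pow_mul_borderedHankelDet_of_lt L hk, mul_zero]
  have hhankel : ∀ n, det (hankel (fun m => L (X ^ m)) n) ≠ 0
    | 0 => by simp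
    | n + 1 => hH n
  refine ⟨fun m n hmn => ?_, fun n => ?_⟩
  · wlog hlt : m < n generalizing m n
    · rw [mul_comm]
      exact this n m hmn.symm (hmn.lt_or_gt.resolve_left hlt)
    have hdeg := natDegree_hankelPencilDet_le (fun m => L (X ^ m)) m
    rw [L.map_mul_eq_coeff_mul (hdeg.trans hlt.le) fun k => horth,
      coeff_eq_zero_of_natDegree_lt (hdeg.trans_lt hlt), zero_mul]
  · rw [sq, L.map_mul_eq_coeff_mul (natDegree_hankelPencilDet_le _ n) fun k => horth,
      coeff_hankelPencilDet, map_X_pow_mul_hankelPencilDet, map_X_pow_self_mul_borderedHankelDet]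
    exact mul_ne_zero (mul_ne_zero (by simp) (hhankel n)) (mul_ne_zero (by simp) (hhankel (n + 1)))

open Polynomial Matrix in
theorem orthogonal_polynomials_from_moments_second_form {K : Type*} [Field K] [CharZero K]
    (L : Polynomial K →ₗ[K] K) (ν : ℕ → K) (hν : ∀ n, ν n = L (X ^ n))
    (hH : ∀ n : ℕ, det (of fun i j : Fin (n + 1) => ν (i.val + j.val)) ≠ 0)
    (Q : ℕ → Polynomial K)
    (hQ : ∀ n, Q n =
      det (of fun i j : Fin n => C (ν (i.val + j.val + 1)) - C (ν (i.val + j.val)) * X)) :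
    (∀ m n, m ≠ n → L (Q m * Q n) = 0) ∧ (∀ n, L (Q n ^ 2) ≠ 0) :=
  orthogonal_polynomials_from_moments_second_form_general L ν hν hH Q hQ
end

section
/- Let L be the linear functional on polynomials with moments μ_s, all of whose Hankel determinants H(n) = det_{0≤i,j≤n−1}(μ_{i+j}) are nonzero, and let (p_n) be the corresponding monic orthogonal polynomials. Then for all non-negative integers m and n, and variables x_1,…,x_m: det_{0≤i,j≤n−1}( L(x^{i+j} ∏_{ℓ=1}^m (x − x_ℓ)) ) / det_{0≤i,j≤n−1}(μ_{i+j}) = (−1)^{nm} det_{1≤i,j≤m}( p_{n+j−1}(x_i) ) / ∏_{1≤i<j≤m}(x_j − x_i). -/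
/-!
Let `Φ` be the family of `m + n` linear functionals `q ↦ q(x_i)` (`i < m`) and
`q ↦ L(X^i q)` (`i < n`), and let `A` be the matrix of `Φ` against the monomials
`1, X, …, X^(m+n-1)`. Replacing the monomials by any family of monic polynomials with the same
degrees multiplies `A` by a unitriangular matrix, so `det A` is unchanged.

With the family `1, …, X^(m-1), π, Xπ, …, X^(n-1)π`, where `π = ∏ (X - x_ℓ)`, the matrix
becomes block triangular since `π(x_i) = 0`, and `det A = V(x) · det(L(X^(i+j) π))`.
With the family `p_n, …, p_(n+m-1), p_0, …, p_(n-1)`, whose degrees are the monomial degrees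
rotated by `n` (a permutation of sign `(-1)^(nm)`), it becomes block triangular by orthogonality,
and `(-1)^(nm) det A = det(p_(n+j)(x_i)) · det(L(X^i p_j))`. The last determinant is the Hankel
determinant, by the same change of basis applied to the functionals `q ↦ L(X^i q)` alone.
-/

open Polynomial Matrix

namespace Polynomial

variable {R : Type*}

theorem degree_sub_C_coeff_mul_lt [Ring R] {q r : R[X]} {k : ℕ} (hr : r.Monic)
    (hrk : r.natDegree = k) (hq : q.degree < ↑(k + 1)) : (q - C (q.coeff k) * r).degree < k := by
  rw [degree_lt_iff_coeff_zero] at hq ⊢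
  intro N hN
  rw [coeff_sub, coeff_C_mul]
  rcases hN.eq_or_lt with rfl | hlt
  · rw [← hrk, hr.coeff_natDegree, mul_one, sub_self]
  · rw [hq N hlt, coeff_eq_zero_of_natDegree_lt (by omega : r.natDegree < N), mul_zero, sub_zero]

theorem map_mul_eq_zero_of_degree_lt [CommRing R] (L : R[X] →ₗ[R] R) {p : ℕ → R[X]}
    (hmonic : ∀ k, (p k).Monic) (hdeg : ∀ k, (p k).natDegree = k)
    (horth : ∀ k t, k ≠ t → L (p k * p t) = 0) {q : R[X]} {t : ℕ} (hq : q.degree < t) :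
    L (q * p t) = 0 := by
  suffices ∀ k ≤ t, ∀ q : R[X], q.degree < k → L (q * p t) = 0 from this t le_rfl q hq
  intro k
  induction k with
  | zero =>
    intro _ q hq
    obtain rfl : q = 0 := by simpa using hq
    rw [zero_mul, map_zero]
  | succ k ih =>
    intro hk q hq
    have hsplit : q * p t = C (q.coeff k) * (p k * p t) + (q - C (q.coeff k) * p k) * p t := by
      ring
    rw [hsplit, map_add, ← smul_eq_C_mul, map_smul, horth k t (by omega), smul_zero, zero_add]
    exact ih (by omega) _ (degree_sub_C_coeff_mul_lt (hmonic k) (hdeg k) hq)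

end Polynomial

section ChangeOfBasis

variable {ι R : Type*} [Fintype ι] [CommRing R] {N : ℕ}

theorem det_of_coeff_eq_one [DecidableEq ι] (q : ι → R[X]) (e : ι ≃ Fin N)
    (hmonic : ∀ j, (q j).Monic) (hdeg : ∀ j, (q j).natDegree = e j) :
    det (of fun i j => (q j).coeff (e i)) = 1 := by
  rw [← det_submatrix_equiv_self e.symm, det_of_isUpperTriangular]
  · refine Finset.prod_eq_one fun i _ => ?_
    simpa [hdeg] using (hmonic (e.symm i)).coeff_natDegree
  · intro i j hji
    simp only [submatrix_apply, of_apply, Equiv.apply_symm_apply]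
    exact coeff_eq_zero_of_natDegree_lt (by simpa [hdeg] using hji)

theorem of_map_eq_of_map_X_pow_mul_of_coeff (φ : ι → R[X] →ₗ[R] R) (q : ι → R[X])
    (e : ι ≃ Fin N) (hq : ∀ j, (q j).natDegree < N) :
    of (fun i j => φ i (q j)) =
      of (fun i j => φ i (X ^ (e j : ℕ))) * of (fun i j => (q j).coeff (e i)) := by
  ext i j
  conv_lhs => rw [of_apply, (q j).as_sum_range' N (hq j)]
  rw [mul_apply, map_sum, ← Fin.sum_univ_eq_sum_range, ← e.sum_comp]
  refine Finset.sum_congr rfl fun k _ => ?_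
  rw [← C_mul_X_pow_eq_monomial, ← smul_eq_C_mul, map_smul, smul_eq_mul, mul_comm, of_apply,
    of_apply]

theorem det_of_map_eq_det_of_map_X_pow [DecidableEq ι] (φ : ι → R[X] →ₗ[R] R)
    (q : ι → R[X]) (e : ι ≃ Fin N) (hmonic : ∀ j, (q j).Monic)
    (hdeg : ∀ j, (q j).natDegree = e j) :
    det (of fun i j => φ i (q j)) = det (of fun i j => φ i (X ^ (e j : ℕ))) := by
  rw [of_map_eq_of_map_X_pow_mul_of_coeff φ q e fun j => hdeg j ▸ (e j).isLt, det_mul,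
    det_of_coeff_eq_one q e hmonic hdeg, mul_one]

theorem det_of_apply_perm {κ : Type*} [DecidableEq ι] [Fintype κ] [DecidableEq κ]
    (f : ι → κ → R) (e : ι ≃ κ) (σ : Equiv.Perm κ) :
    det (of fun i j => f i (σ (e j))) = Equiv.Perm.sign σ * det (of fun i j => f i (e j)) := by
  have hperm : (of fun i j => f i (σ (e j))) =
      (of fun i j => f i (e j)).submatrix id (e.symm.permCongr σ) := by
    ext i j
    simp [Equiv.permCongr_apply]
  rw [hperm, det_permute', Equiv.Perm.sign_permCongr]

theorem det_hankel_eq_det_of_map_X_pow_mul (L : R[X] →ₗ[R] R) {p : ℕ → R[X]}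
    (hmonic : ∀ k, (p k).Monic) (hdeg : ∀ k, (p k).natDegree = k) (n : ℕ) :
    det (of fun i j : Fin n => L (X ^ (i.val + j.val))) =
      det (of fun i j : Fin n => L (X ^ i.val * p j)) := by
  simpa [pow_add] using (det_of_map_eq_det_of_map_X_pow
    (fun i : Fin n => L ∘ₗ LinearMap.mulLeft R (X ^ i.val)) (fun j => p j) (Equiv.refl _)
    (fun j => hmonic j) (fun j => hdeg j)).symm

end ChangeOfBasis

theorem coe_finRotate_pow {N : ℕ} (i : Fin N) (k : ℕ) :
    ((finRotate N ^ k) i : ℕ) = (i + k) % N := by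
  induction k with
  | zero => simp [Nat.mod_eq_of_lt i.isLt]
  | succ k ih =>
    have := i.neZero
    rw [pow_succ', Equiv.Perm.mul_apply, finRotate_apply, Fin.val_add, ih, Fin.val_one',
      Nat.mod_add_mod, Nat.add_mod_mod, add_assoc]

theorem sign_finRotate_pow (m n : ℕ) :
    Equiv.Perm.sign (finRotate (m + n) ^ n) = (-1) ^ (m * n) := by
  rw [map_pow, sign_finRotate, ← pow_mul]
  rcases n with _ | k
  · simp
  · rw [show (m + (k + 1) - 1) * (k + 1) = m * (k + 1) + k * (k + 1) by
      rw [Nat.add_sub_assoc (by omega), Nat.add_sub_cancel]; ring, pow_add,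
      (Nat.even_mul_succ_self k).neg_one_pow, mul_one]

theorem finRotate_pow_finSumFinEquiv_inl {m n : ℕ} (j : Fin m) :
    ((finRotate (m + n) ^ n) (finSumFinEquiv (Sum.inl j)) : ℕ) = n + j := by
  rw [coe_finRotate_pow, finSumFinEquiv_apply_left, Fin.val_castAdd,
    Nat.mod_eq_of_lt (by omega), add_comm]

theorem finRotate_pow_finSumFinEquiv_inr {m n : ℕ} (j : Fin n) :
    ((finRotate (m + n) ^ n) (finSumFinEquiv (Sum.inr j)) : ℕ) = j := by
  rw [coe_finRotate_pow, finSumFinEquiv_apply_right, Fin.val_natAdd,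
    show m + j.val + n = j.val + (m + n) by omega, Nat.add_mod_right, Nat.mod_eq_of_lt (by omega)]

section Augmented

variable {R : Type*} [CommRing R] {m : ℕ}

noncomputable def augmentedRows (L : R[X] →ₗ[R] R) (x : Fin m → R) (n : ℕ) :
    Fin m ⊕ Fin n → R[X] →ₗ[R] R :=
  Sum.elim (fun i => leval (x i)) fun i => L ∘ₗ LinearMap.mulLeft R (X ^ i.val)

theorem det_augmentedRows_X_pow [Nontrivial R] (L : R[X] →ₗ[R] R) (x : Fin m → R) (n : ℕ)
    {π : R[X]} (hπ : π.Monic) (hπdeg : π.natDegree = m) (hπroot : ∀ i, π.eval (x i) = 0) :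
    det (of fun i j => augmentedRows L x n i (X ^ (finSumFinEquiv j : ℕ))) =
      det (vandermonde x) * det (of fun i j : Fin n => L (X ^ (i.val + j.val) * π)) := by
  rw [← det_of_map_eq_det_of_map_X_pow _ (Sum.elim (fun j => X ^ j.val) fun j => X ^ j.val * π)
    finSumFinEquiv ?_ ?_, ← det_fromBlocks_zero₁₂ (vandermonde x)
      (of fun (i : Fin n) (j : Fin m) => L (X ^ (i.val + j.val)))]
  · congr 1
    ext (i | i) (j | j) <;> simp [augmentedRows, hπroot, pow_add, mul_assoc]
  · rintro (j | j)
    exacts [monic_X_pow _, (monic_X_pow _).mul hπ]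
  · rintro (j | j) <;> simp [(monic_X_pow _).natDegree_mul hπ, hπdeg, add_comm]

theorem det_augmentedRows_X_pow_rotate (L : R[X] →ₗ[R] R) (x : Fin m → R) (n : ℕ)
    {p : ℕ → R[X]} (hmonic : ∀ k, (p k).Monic) (hdeg : ∀ k, (p k).natDegree = k)
    (horth : ∀ k t, k ≠ t → L (p k * p t) = 0) :
    det (of fun i j => augmentedRows L x n i
        (X ^ ((finRotate (m + n) ^ n) (finSumFinEquiv j) : ℕ))) =
      det (of fun i j : Fin m => (p (n + j.val)).eval (x i)) *
        det (of fun i j : Fin n => L (X ^ (i.val + j.val))) := by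
  refine (det_of_map_eq_det_of_map_X_pow _ (Sum.elim (fun j => p (n + j.val)) fun j => p j.val)
    (finSumFinEquiv.trans (finRotate (m + n) ^ n)) ?_ ?_).symm.trans ?_
  · rintro (j | j) <;> exact hmonic _
  · rintro (j | j)
    · simp only [Sum.elim_inl, Equiv.trans_apply, hdeg, finRotate_pow_finSumFinEquiv_inl]
    · simp only [Sum.elim_inr, Equiv.trans_apply, hdeg, finRotate_pow_finSumFinEquiv_inr]
  rw [det_hankel_eq_det_of_map_X_pow_mul L hmonic hdeg n,
    ← det_fromBlocks_zero₂₁ _ (of fun (i : Fin m) (j : Fin n) => (p j.val).eval (x i))]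
  congr 1
  ext (i | i) (j | j) <;>
    simp only [augmentedRows, of_apply, Sum.elim_inl, Sum.elim_inr, leval_apply,
      LinearMap.coe_comp, Function.comp_apply, LinearMap.mulLeft_apply, fromBlocks_apply₁₁,
      fromBlocks_apply₁₂, fromBlocks_apply₂₁, fromBlocks_apply₂₂, Matrix.zero_apply]
  exact map_mul_eq_zero_of_degree_lt L hmonic hdeg horth
    ((degree_X_pow_le _).trans_lt (by exact_mod_cast (by omega : i.val < n + j.val)))

end Augmented

open Polynomial Matrix in
theorem hankel_det_linear_combination_of_moments_general {K : Type*} [Field K]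
    (L : Polynomial K →ₗ[K] K) (p : ℕ → Polynomial K) (ω : ℕ → K)
    (hmonic : ∀ n, (p n).Monic) (hdeg : ∀ n, (p n).natDegree = n)
    (horth : ∀ m' n', L (p m' * p n') = if m' = n' then ω n' else 0)
    (m n : ℕ) (x : Fin m → K) :
    det (of fun i j : Fin n => L (X ^ (i.val + j.val) * ∏ ℓ, (X - C (x ℓ)))) *
        ∏ i : Fin m, ∏ j ∈ Finset.univ.filter (fun j => i < j), (x j - x i) =
      (-1) ^ (n * m) *
        det (of fun i j : Fin m => (p (n + j.val)).eval (x i)) *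
        det (of fun i j : Fin n => L (X ^ (i.val + j.val))) := by
  set π : K[X] := ∏ ℓ, (X - C (x ℓ))
  have hπ : π.Monic := monic_prod_X_sub_C x Finset.univ
  have hπdeg : π.natDegree = m := by
    simp [π, natDegree_prod_of_monic _ _ fun ℓ _ => monic_X_sub_C (x ℓ)]
  have hπroot : ∀ i, π.eval (x i) = 0 := fun i => by
    rw [eval_prod]
    exact Finset.prod_eq_zero (Finset.mem_univ i) (by simp)
  have hsign := det_of_apply_perm (fun i (k : Fin (m + n)) => augmentedRows L x n i (X ^ (k : ℕ)))
    finSumFinEquiv (finRotate (m + n) ^ n)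
  rw [sign_finRotate_pow, det_augmentedRows_X_pow_rotate L x n hmonic hdeg
      fun k t h => by rw [horth, if_neg h],
    det_augmentedRows_X_pow L x n hπ hπdeg hπroot] at hsign
  push_cast at hsign
  have hsq : ((-1 : K) ^ (n * m)) ^ 2 = 1 := by rw [← pow_mul, pow_mul', neg_one_sq, one_pow]
  simp only [Finset.filter_lt_eq_Ioi, ← det_vandermonde]
  linear_combination (-(-1) ^ (n * m)) * hsign -
    det (of fun i j : Fin n => L (X ^ (i.val + j.val) * π)) * det (vandermonde x) * hsq

open Polynomial Matrix in
/-- The `k = 0` case of the main theorem: the Hankel determinant of the moments of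
`p ↦ L(p(x)·∏_ℓ(x - x_ℓ))` divided by the Hankel determinant of the moments of `L` equals
`(-1)^{nm}` times `det(p_{n+j-1}(x_i))` divided by the Vandermonde product.  Stated in
cross-multiplied (polynomial) form. -/
theorem hankel_det_linear_combination_of_moments {K : Type*} [Field K] [CharZero K]
    (L : Polynomial K →ₗ[K] K) (p : ℕ → Polynomial K) (ω : ℕ → K)
    (hmonic : ∀ n, (p n).Monic) (hdeg : ∀ n, (p n).natDegree = n)
    (horth : ∀ m' n', L (p m' * p n') = if m' = n' then ω n' else 0)
    (hω : ∀ n, ω n ≠ 0)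
    (hH : ∀ n : ℕ, det (of fun i j : Fin n => L (X ^ (i.val + j.val))) ≠ 0)
    (m n : ℕ) (x : Fin m → K) :
    det (of fun i j : Fin n => L (X ^ (i.val + j.val) * ∏ ℓ, (X - C (x ℓ)))) *
        ∏ i : Fin m, ∏ j ∈ Finset.univ.filter (fun j => i < j), (x j - x i) =
      (-1) ^ (n * m) *
        det (of fun i j : Fin m => (p (n + j.val)).eval (x i)) *
        det (of fun i j : Fin n => L (X ^ (i.val + j.val))) :=
  hankel_det_linear_combination_of_moments_general L p ω hmonic hdeg horth m n x
end

section
/- For every real a with |a| ≥ 1 and every non-negative integer n, (1/π) ∫_{−2}^{2} u^n √(1 − u²/4)/(u + 2a) du = ω(a)(−2a)^n + Σ_{k=0}^{⌊(n−1)/2⌋} (−2a)^{n−2k−1} C_k, where ω(a) = a − sgn(a)·√(a² − 1) and C_k is the k-th Catalan number. -/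
/-!
Write `s(u) = √(1 - u²/4)` and `Iₙ = ∫_{-2}^{2} uⁿ s(u) / (u + 2a) du`. Dividing `uⁿ⁺¹` by
`u + 2a` gives the recursion `Iₙ₊₁ = Mₙ - 2a Iₙ`, where `Mₙ = ∫_{-2}^{2} uⁿ s(u) du` is the
`n`-th moment of the semicircle law: `π C_{n/2}` for even `n` (substitute `u = 2 sin θ` and use
Wallis' recursion) and `0` for odd `n`. Unrolling the recursion from `I₀ = π ω(a)` gives the
formula. For `a ≥ 1`, `I₀` is computed with the explicit primitive
`a arcsin(u/2) + s(u) - √(a² - 1) arcsin((2 + au)/(2a + u))`; the case `a ≤ -1` follows from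
the reflection `u ↦ -u`, under which `I₀` and `ω` are both odd in `a`.
-/

/-- `ω(a) = a - sgn(a)·√(a² - 1)`, the value of `(1/π)∫_{-1}^{1} √(1-u²)/(u+a) du`
for `|a| ≥ 1`. -/
noncomputable def omegaFn (a : ℝ) : ℝ := a - Real.sign a * Real.sqrt (a ^ 2 - 1)

open Real Set MeasureTheory intervalIntegral

noncomputable def semicircle (u : ℝ) : ℝ := √(1 - u ^ 2 / 4)

@[fun_prop]
lemma continuous_semicircle : Continuous semicircle := by
  unfold semicircle; fun_prop

lemma semicircle_neg (u : ℝ) : semicircle (-u) = semicircle u := by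
  simp [semicircle]

lemma semicircle_pos {x : ℝ} (hx : x ∈ Ioo (-2 : ℝ) 2) : 0 < semicircle x :=
  sqrt_pos.2 (by nlinarith [hx.1, hx.2])

lemma sq_semicircle {x : ℝ} (hx : x ∈ Ioo (-2 : ℝ) 2) : semicircle x ^ 2 = 1 - x ^ 2 / 4 :=
  sq_sqrt (by nlinarith [hx.1, hx.2])

lemma semicircle_two_mul_sin {θ : ℝ} (hθ : θ ∈ Icc (-(π / 2)) (π / 2)) :
    semicircle (2 * sin θ) = cos θ := by
  rw [semicircle, show 1 - (2 * sin θ) ^ 2 / 4 = cos θ ^ 2 by linarith [sin_sq_add_cos_sq θ],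
    sqrt_sq (cos_nonneg_of_mem_Icc hθ)]

lemma integral_sin_pow_two_mul_symm (k : ℕ) :
    ∫ x in -(π / 2)..π / 2, sin x ^ (2 * k) = π * k.centralBinom / 4 ^ k := by
  induction k with
  | zero => simp
  | succ k ih =>
    have hk : ((k + 1 : ℕ) : ℝ) * (k + 1).centralBinom = 2 * (2 * k + 1) * k.centralBinom := by
      exact_mod_cast Nat.succ_mul_centralBinom_succ k
    rw [mul_add_one, integral_sin_pow, ih]
    push_cast at hk ⊢
    simp only [sin_neg, cos_neg, cos_pi_div_two, mul_zero, sub_zero, zero_div, zero_add]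
    field_simp
    linear_combination (-2 * 4 ^ k) * hk

lemma integral_pow_two_mul_mul_semicircle (k : ℕ) :
    ∫ u in (-2 : ℝ)..2, u ^ (2 * k) * semicircle u = π * catalan k := by
  have hsub := integral_comp_mul_deriv (a := -(π / 2)) (b := π / 2)
    (f := fun θ => 2 * sin θ) (f' := fun θ => 2 * cos θ)
    (g := fun u => u ^ (2 * k) * semicircle u)
    (fun θ _ => (hasDerivAt_sin θ).const_mul 2) (by fun_prop) (by fun_prop)
  simp only [Function.comp_def, sin_neg, sin_pi_div_two, mul_neg, mul_one] at hsub
  have hcat : (catalan k : ℝ) = k.centralBinom / (k + 1) := by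
    rw [eq_div_iff (by positivity), mul_comm]
    exact_mod_cast succ_mul_catalan_eq_centralBinom k
  have hk : ((k + 1).centralBinom : ℝ) = 2 * (2 * k + 1) * k.centralBinom / (k + 1) := by
    rw [eq_div_iff (by positivity), mul_comm]
    exact_mod_cast Nat.succ_mul_centralBinom_succ k
  rw [← hsub]
  calc ∫ θ in -(π / 2)..π / 2, (2 * sin θ) ^ (2 * k) * semicircle (2 * sin θ) * (2 * cos θ)
      = ∫ θ in -(π / 2)..π / 2, 2 ^ (2 * k + 1) * (sin θ ^ (2 * k) - sin θ ^ (2 * (k + 1))) := by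
        refine integral_congr fun θ hθ => ?_
        rw [uIcc_of_le (by linarith [pi_pos])] at hθ
        rw [semicircle_two_mul_sin hθ]
        linear_combination (2 ^ (2 * k + 1) * sin θ ^ (2 * k)) * sin_sq_add_cos_sq θ
    _ = 2 ^ (2 * k + 1) *
          (π * k.centralBinom / 4 ^ k - π * (k + 1).centralBinom / 4 ^ (k + 1)) := by
        rw [intervalIntegral.integral_const_mul, intervalIntegral.integral_sub
          (by apply Continuous.intervalIntegrable; fun_prop)
          (by apply Continuous.intervalIntegrable; fun_prop),
          integral_sin_pow_two_mul_symm, integral_sin_pow_two_mul_symm]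
    _ = π * catalan k := by
        rw [hcat, hk, pow_succ, pow_mul, pow_succ]
        field_simp
        ring

lemma integral_eq_zero_of_odd {f : ℝ → ℝ} (hf : ∀ x, f (-x) = -f x) (c : ℝ) :
    ∫ x in -c..c, f x = 0 := by
  have h := integral_comp_neg (a := -c) (b := c) f
  simp only [hf, intervalIntegral.integral_neg, neg_neg] at h
  linarith

lemma integral_pow_mul_semicircle (n : ℕ) :
    ∫ u in (-2 : ℝ)..2, u ^ n * semicircle u =
      π * if Even n then (catalan (n / 2) : ℝ) else 0 := by
  obtain ⟨k, rfl | rfl⟩ := Nat.even_or_odd' n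
  · simp [integral_pow_two_mul_mul_semicircle]
  · rw [if_neg (Nat.not_even_bit1 k), mul_zero]
    exact integral_eq_zero_of_odd
      (fun u => by rw [semicircle_neg, Odd.neg_pow ⟨k, rfl⟩, neg_mul]) 2

lemma hasDerivAt_semicircle {x : ℝ} (hx : x ∈ Ioo (-2 : ℝ) 2) :
    HasDerivAt semicircle (-x / (4 * semicircle x)) x := by
  refine ((((hasDerivAt_pow 2 x).div_const 4).const_sub 1).sqrt
    (sqrt_pos.1 (semicircle_pos hx)).ne').congr_deriv ?_
  unfold semicircle
  ring

lemma hasDerivAt_arcsin_div_two {x : ℝ} (hx : x ∈ Ioo (-2 : ℝ) 2) :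
    HasDerivAt (fun u => arcsin (u / 2)) (1 / (2 * semicircle x)) x := by
  refine ((hasDerivAt_arcsin (by linarith [hx.1]) (by linarith [hx.2])).comp x
    ((hasDerivAt_id' x).div_const 2)).congr_deriv ?_
  simp only [semicircle]
  ring_nf

lemma hasDerivAt_sqrt_mul_arcsin {a x : ℝ} (ha : 1 ≤ a) (hx : x ∈ Ioo (-2 : ℝ) 2) :
    HasDerivAt (fun u => √(a ^ 2 - 1) * arcsin ((2 + a * u) / (2 * a + u)))
      ((a ^ 2 - 1) / (semicircle x * (x + 2 * a))) x := by
  obtain rfl | ha := ha.eq_or_lt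
  · simpa using hasDerivAt_const x (0 : ℝ)
  have hs := semicircle_pos hx
  have hs2 := sq_semicircle hx
  have hd : 0 < 2 * a + x := by linarith [hx.1]
  have ht : 0 < √(a ^ 2 - 1) := sqrt_pos.2 (by nlinarith)
  have ht2 : √(a ^ 2 - 1) ^ 2 = a ^ 2 - 1 := sq_sqrt (by nlinarith)
  have hq : HasDerivAt (fun u => (2 + a * u) / (2 * a + u))
      (2 * (a ^ 2 - 1) / (2 * a + x) ^ 2) x := by
    refine (((hasDerivAt_id x).const_mul a |>.const_add 2).div
      ((hasDerivAt_id x).const_add (2 * a)) hd.ne').congr_deriv ?_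
    simp only [id]
    ring
  have hq1 : (2 + a * x) / (2 * a + x) ≠ 1 := by
    rw [Ne, div_eq_one_iff_eq hd.ne']
    nlinarith [hx.2]
  have hqm1 : (2 + a * x) / (2 * a + x) ≠ -1 := by
    rw [Ne, div_eq_iff hd.ne']
    nlinarith [hx.1]
  have hroot : √(1 - ((2 + a * x) / (2 * a + x)) ^ 2) =
      2 * √(a ^ 2 - 1) * semicircle x / (2 * a + x) := by
    rw [← sqrt_sq (by positivity : 0 ≤ 2 * √(a ^ 2 - 1) * semicircle x / (2 * a + x))]
    congr 1
    simp only [div_pow, mul_pow, ht2, hs2]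
    field_simp
    ring
  refine (((hasDerivAt_arcsin hqm1 hq1).comp x hq).const_mul (√(a ^ 2 - 1))).congr_deriv ?_
  rw [hroot]
  field_simp
  ring

/- At `a = 1`, `u = -2` the quotient is the junk value `0 / 0 = 0`, which is harmless because
the factor `√(a² - 1)` vanishes. -/
lemma continuousOn_sqrt_mul_arcsin {a : ℝ} (ha : 1 ≤ a) :
    ContinuousOn (fun u => √(a ^ 2 - 1) * arcsin ((2 + a * u) / (2 * a + u))) (Icc (-2) 2) := by
  obtain rfl | ha := ha.eq_or_lt
  · simpa using continuousOn_const
  refine continuousOn_const.mul (continuous_arcsin.comp_continuousOn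
    (continuousOn_const.add (continuousOn_const.mul continuousOn_id) |>.div
      (continuousOn_const.add continuousOn_id)
      fun u hu => (show 0 < 2 * a + u by linarith [hu.1]).ne'))

lemma sqrt_mul_arcsin_at_neg_two {a : ℝ} (ha : 1 ≤ a) :
    √(a ^ 2 - 1) * arcsin ((2 + a * -2) / (2 * a + -2)) = -(√(a ^ 2 - 1) * (π / 2)) := by
  obtain rfl | ha := ha.eq_or_lt
  · simp
  rw [show (2 + a * -2) / (2 * a + -2) = -1 by rw [div_eq_iff (by linarith)]; ring,
    arcsin_neg_one]
  ring

lemma omegaFn_of_one_le {a : ℝ} (ha : 1 ≤ a) : omegaFn a = a - √(a ^ 2 - 1) := by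
  rw [omegaFn, Real.sign_of_pos (by linarith), one_mul]

lemma omegaFn_neg (a : ℝ) : omegaFn (-a) = -omegaFn a := by
  simp only [omegaFn, Real.sign_neg, neg_sq]
  ring

lemma integral_semicircle_div_of_one_le {a : ℝ} (ha : 1 ≤ a) :
    IntervalIntegrable (fun u => semicircle u / (u + 2 * a)) volume (-2) 2 ∧
      ∫ u in (-2 : ℝ)..2, semicircle u / (u + 2 * a) = π * omegaFn a := by
  set F : ℝ → ℝ := fun u =>
    a * arcsin (u / 2) + semicircle u - √(a ^ 2 - 1) * arcsin ((2 + a * u) / (2 * a + u))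
  have hF : ∀ x ∈ Ioo (-2 : ℝ) 2, HasDerivAt F (semicircle x / (x + 2 * a)) x := by
    intro x hx
    refine (((hasDerivAt_arcsin_div_two hx).const_mul a).add (hasDerivAt_semicircle hx) |>.sub
      (hasDerivAt_sqrt_mul_arcsin ha hx)).congr_deriv ?_
    have hs := semicircle_pos hx
    have hs2 := sq_semicircle hx
    have hd : x + a * 2 ≠ 0 := by linarith [hx.1]
    field_simp
    linear_combination (-8) * hs2
  have hcont : ContinuousOn F (Icc (-2) 2) :=
    ((continuous_const.mul (continuous_arcsin.comp (continuous_id.div_const 2))).add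
      continuous_semicircle).continuousOn.sub (continuousOn_sqrt_mul_arcsin ha)
  have hint : IntervalIntegrable (fun u => semicircle u / (u + 2 * a)) volume (-2) 2 := by
    refine intervalIntegrable_deriv_of_nonneg (g := F) ?_ ?_ ?_
    · rwa [uIcc_of_le (by norm_num)]
    · simpa using hF
    · intro x hx
      simp only [show min (-2 : ℝ) 2 = -2 by norm_num, show max (-2 : ℝ) 2 = 2 by norm_num] at hx
      exact div_nonneg (semicircle_pos hx).le (by linarith [hx.1])
  refine ⟨hint, ?_⟩
  rw [integral_eq_sub_of_hasDerivAt_of_le (by norm_num) hcont hF hint, omegaFn_of_one_le ha]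
  simp only [F, sqrt_mul_arcsin_at_neg_two ha]
  rw [show (2 + a * 2) / (2 * a + 2) = 1 by field_simp; ring]
  simp [semicircle]
  ring

lemma semicircle_div_comp_neg (a u : ℝ) :
    semicircle (-u) / (-u + 2 * -a) = -(semicircle u / (u + 2 * a)) := by
  rw [semicircle_neg, ← div_neg]
  ring_nf

lemma integral_semicircle_div {a : ℝ} (ha : 1 ≤ |a|) :
    IntervalIntegrable (fun u => semicircle u / (u + 2 * a)) volume (-2) 2 ∧
      ∫ u in (-2 : ℝ)..2, semicircle u / (u + 2 * a) = π * omegaFn a := by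
  rcases le_abs'.1 ha with ha | ha
  · obtain ⟨hint, heq⟩ := integral_semicircle_div_of_one_le (a := -a) (by linarith)
    refine ⟨?_, ?_⟩
    · have hrefl := (IntervalIntegrable.iff_comp_neg (a := -2) (b := 2)
        (f := fun u => semicircle u / (u + 2 * -a))).1 hint
      simp only [semicircle_div_comp_neg, neg_neg] at hrefl
      simpa [Pi.neg_def] using hrefl.symm.neg
    · have hneg := integral_comp_neg (a := -2) (b := 2) fun u => semicircle u / (u + 2 * -a)
      simp only [semicircle_div_comp_neg, intervalIntegral.integral_neg, neg_neg] at hneg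
      rw [omegaFn_neg] at heq
      linarith
  · exact integral_semicircle_div_of_one_le ha

lemma integral_pow_succ_mul_div_add {w : ℝ → ℝ} {α β c : ℝ} (n : ℕ)
    (hw : IntervalIntegrable (fun u => u ^ n * w u) volume α β)
    (hwc : IntervalIntegrable (fun u => u ^ n * w u / (u + c)) volume α β) :
    ∫ u in α..β, u ^ (n + 1) * w u / (u + c) =
      (∫ u in α..β, u ^ n * w u) - c * ∫ u in α..β, u ^ n * w u / (u + c) := by
  rw [← intervalIntegral.integral_const_mul, ← intervalIntegral.integral_sub hw (hwc.const_mul c)]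
  refine integral_congr_ae ?_
  filter_upwards [Measure.ae_ne volume (-c)] with u hu _
  have : u + c ≠ 0 := fun h => hu (by linarith)
  field_simp
  ring

lemma sum_catalan_succ (x : ℝ) (n : ℕ) :
    ∑ k ∈ Finset.range ((n + 1 + 1) / 2), x ^ (n + 1 - 2 * k - 1) * (catalan k : ℝ) =
      x * ∑ k ∈ Finset.range ((n + 1) / 2), x ^ (n - 2 * k - 1) * (catalan k : ℝ) +
        if Even n then (catalan (n / 2) : ℝ) else 0 := by
  have hterm : ∀ k ∈ Finset.range ((n + 1) / 2),
      x ^ (n + 1 - 2 * k - 1) * (catalan k : ℝ) = x * (x ^ (n - 2 * k - 1) * catalan k) := by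
    intro k hk
    rw [Finset.mem_range] at hk
    rw [show n + 1 - 2 * k - 1 = n - 2 * k - 1 + 1 by omega, pow_succ]
    ring
  rw [Finset.mul_sum, ← Finset.sum_congr rfl hterm]
  obtain ⟨m, rfl | rfl⟩ := Nat.even_or_odd' n
  · rw [show (2 * m + 1 + 1) / 2 = m + 1 by omega, show (2 * m + 1) / 2 = m by omega,
      Finset.sum_range_succ]
    simp
  · rw [show (2 * m + 1 + 1 + 1) / 2 = (2 * m + 1 + 1) / 2 by omega]
    simp [Nat.not_even_bit1]

lemma integral_pow_mul_semicircle_div {a : ℝ} (ha : 1 ≤ |a|) (n : ℕ) :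
    ∫ u in (-2 : ℝ)..2, u ^ n * semicircle u / (u + 2 * a) =
      π * (omegaFn a * (-2 * a) ^ n +
        ∑ k ∈ Finset.range ((n + 1) / 2), (-2 * a) ^ (n - 2 * k - 1) * (catalan k : ℝ)) := by
  obtain ⟨hint, h0⟩ := integral_semicircle_div ha
  induction n with
  | zero => simpa using h0
  | succ n ih =>
    have hwc : IntervalIntegrable (fun u => u ^ n * semicircle u / (u + 2 * a)) volume (-2) 2 := by
      simpa only [mul_div_assoc] using hint.continuousOn_mul (continuous_pow n).continuousOn
    rw [integral_pow_succ_mul_div_add n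
      (((continuous_pow n).mul continuous_semicircle).intervalIntegrable _ _) hwc,
      integral_pow_mul_semicircle, ih, sum_catalan_succ]
    ring

theorem moments_of_rational_chebyshev_density (a : ℝ) (ha : 1 ≤ |a|) (n : ℕ) :
    (1 / Real.pi) * ∫ u in (-2 : ℝ)..2, u ^ n * Real.sqrt (1 - u ^ 2 / 4) / (u + 2 * a) =
      omegaFn a * (-2 * a) ^ n +
        ∑ k ∈ Finset.range ((n + 1) / 2), (-2 * a) ^ (n - 2 * k - 1) * (catalan k : ℝ) := by
  have h := integral_pow_mul_semicircle_div ha n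
  unfold semicircle at h
  rw [h]
  field_simp
end

section
/- Let X and a be variables (elements of a field of characteristic zero, or indeterminates). For every positive integer n: det_{0≤i,j≤n−1}( X(−2a)^{i+j} + Σ_{k=0}^{⌊(i+j−1)/2⌋} (−2a)^{i+j−2k−1} C_k ) = (−1)^{n−1} ( X·U_{n−1}(−a) + U_{n−2}(−a) ), where C_k is the k-th Catalan number, U_m is the Chebyshev polynomial of the second kind, and U_{−1} = 0. -/
/-- Ballot numbers: paths with ±1 steps staying ≥ 0. -/
def hankelBal : ℕ → ℕ → ℕ
  | 0, 0 => 1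
  | 0, _+1 => 0
  | i+1, 0 => hankelBal i 1
  | i+1, k+1 => hankelBal i (k+2) + hankelBal i k

/-- Aerated Catalan numbers. -/
def hankelC (m : ℕ) : ℕ := if m % 2 = 0 then catalan (m / 2) else 0

lemma hankelBal_succ (i k : ℕ) :
    hankelBal (i+1) k = hankelBal i (k+1) + if k = 0 then 0 else hankelBal i (k-1) := by
  match k with
  | 0 => simp [hankelBal]
  | k+1 => simp [hankelBal]

lemma hankelBal_eq_zero {i k : ℕ} (h : i < k) : hankelBal i k = 0 := by
  induction i generalizing k with
  | zero => match k, h with | k+1, _ => rfl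
  | succ i ih =>
    rw [hankelBal_succ]
    rw [ih (by omega)]
    have hk : k ≠ 0 := by omega
    simp only [hk, if_false]
    rw [ih (by omega)]

lemma hankelBal_diag (i : ℕ) : hankelBal i i = 1 := by
  induction i with
  | zero => rfl
  | succ i ih =>
    rw [hankelBal_succ, hankelBal_eq_zero (by omega)]
    simp [ih]

lemma hankelBal_parity {i k : ℕ} (h : (i + k) % 2 = 1) : hankelBal i k = 0 := by
  induction i generalizing k with
  | zero => match k, h with | k+1, _ => rfl
  | succ i ih =>
    rw [hankelBal_succ, ih (by omega)]
    rcases Nat.eq_zero_or_pos k with hk | hk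
    · simp [hk]
    · have hk' : k ≠ 0 := by omega
      simp only [hk', if_false]
      rw [ih (by omega)]

lemma hankelBal_choose : ∀ i k r, i = k + 2*(r+1) →
    hankelBal i k + i.choose r = i.choose (r+1) := by
  intro i
  induction i with
  | zero => intro k r h; omega
  | succ i ih =>
    intro k r h
    rw [hankelBal_succ]
    rcases k with _ | k'
    · -- k = 0, i = 1 + 2r
      simp only [reduceIte, Nat.add_zero]
      rcases r with _ | r'
      · -- i = 1
        have hi : i = 1 := by omega
        subst hi
        simp [hankelBal, Nat.choose]
      · have hi : i = 1 + 2*(r'+1) := by omega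
        have h1 := ih 1 r' (by omega)
        have hsymm : i.choose (r'+1) = i.choose (r'+2) := by
          have : r'+2 = i - (r'+1) := by omega
          rw [this]
          exact (Nat.choose_symm (by omega)).symm
        have p1 := Nat.choose_succ_succ' i r'
        have p2 := Nat.choose_succ_succ' i (r'+1)
        simp only [show r'+1+1 = r'+2 from rfl, Nat.zero_add] at p1 p2 ⊢
        omega
    · -- k = k'+1
      have hne : (k' + 1 : ℕ) ≠ 0 := by omega
      simp only [hne, if_false, Nat.add_sub_cancel]
      have h2 : hankelBal i k' + i.choose r = i.choose (r+1) := ih k' r (by omega)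
      have p1 := Nat.choose_succ_succ' i r
      rcases r with _ | r''
      · -- r = 0 : i = k'+2, so bal i (k'+2) = 1
        have hd : hankelBal i (k'+1+1) = 1 := by
          have : k'+1+1 = i := by omega
          rw [this]; exact hankelBal_diag _
        simp only [Nat.choose_zero_right, Nat.choose_one_right] at h2 p1 ⊢
        omega
      · have h3 : hankelBal i (k'+1+1) + i.choose r'' = i.choose (r''+1) :=
          ih (k'+1+1) r'' (by omega)
        have p2 := Nat.choose_succ_succ' i (r''+1)
        have p0 := Nat.choose_succ_succ' i r''
        simp only [show r''+1+1 = r''+2 from rfl] at p0 p1 p2 h2 ⊢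
        omega

lemma hankelBal_zero_eq (m : ℕ) : hankelBal m 0 = hankelC m := by
  rcases Nat.even_or_odd m with ⟨t, ht⟩ | ⟨t, ht⟩
  · subst ht
    have hC : hankelC (t + t) = catalan t := by
      simp [hankelC, Nat.mul_div_cancel_left, (by omega : (t+t) % 2 = 0), (by omega : (t+t)/2 = t)]
    rw [hC]
    rcases t with _ | t'
    · simp [hankelBal]
    · have h := hankelBal_choose (t'+1+(t'+1)) 0 t' (by omega)
      -- bal (2t'+2) 0 = choose (2t'+2) (t'+1) - choose (2t'+2) t'
      have hcb : (t'+2) * catalan (t'+1) = (2*(t'+1)).choose (t'+1) :=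
        succ_mul_catalan_eq_centralBinom (t'+1)
      have hcr : (2*(t'+1)).choose (t'+1) * (t'+1) = (2*(t'+1)).choose t' * (t'+2) := by
        have := Nat.choose_succ_right_eq (2*(t'+1)) t'
        have hs : 2*(t'+1) - t' = t' + 2 := by omega
        rw [hs] at this
        exact this
      have he : t'+1+(t'+1) = 2*(t'+1) := by omega
      rw [he] at h
      -- (t'+2) * bal = (t'+2)*choose(t'+1) - (t'+2)*choose t' = (t'+2)*choose(t'+1) - (t'+1)*choose(t'+1) = choose (t'+1)
      have key : (t'+2) * hankelBal (2*(t'+1)) 0 = (t'+2) * catalan (t'+1) := by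
        rw [hcb]
        nlinarith [h, hcr]
      have := Nat.eq_of_mul_eq_mul_left (by omega : 0 < t'+2) key
      rw [← he] at this
      exact this
  · subst ht
    rw [hankelBal_parity (by omega)]
    simp [hankelC, (by omega : (2*t+1) % 2 = 1)]

open Finset in
lemma hankelBal_shift (x y N : ℕ) (hy : y < N) :
    ∑ k ∈ Finset.range N, (if k = 0 then 0 else hankelBal x (k-1) * hankelBal y k)
      = ∑ k ∈ Finset.range N, hankelBal x k * hankelBal y (k+1) := by
  match N, hy with
  | N'+1, hy =>
    rw [Finset.sum_range_succ' _ N', Finset.sum_range_succ _ N']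
    simp only [Nat.add_sub_cancel, if_neg (Nat.succ_ne_zero _), if_pos rfl]
    rw [hankelBal_eq_zero (show y < N'+1 from hy), Nat.mul_zero, Nat.add_zero]
    simp

open Finset in
lemma hankelBal_star : ∀ i j N, i + j < N →
    ∑ k ∈ Finset.range N, hankelBal i k * hankelBal j k = hankelC (i + j) := by
  intro i
  induction i with
  | zero =>
    intro j N h
    rw [Finset.sum_eq_single_of_mem 0 (Finset.mem_range.mpr (by omega))
      (fun b _ hb => by rw [hankelBal_eq_zero (show 0 < b by omega), Nat.zero_mul])]
    show 1 * hankelBal j 0 = _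
    rw [Nat.one_mul, hankelBal_zero_eq, Nat.zero_add]
  | succ i ih =>
    intro j N h
    have expand : ∀ k ∈ Finset.range N, hankelBal (i+1) k * hankelBal j k =
        hankelBal i (k+1) * hankelBal j k
          + (if k = 0 then 0 else hankelBal i (k-1) * hankelBal j k) := by
      intro k _
      rw [hankelBal_succ, Nat.add_mul]
      congr 1
      split_ifs
      · rw [Nat.zero_mul]
      · rfl
    rw [Finset.sum_congr rfl expand, Finset.sum_add_distrib]
    have first : ∑ k ∈ Finset.range N, hankelBal i (k+1) * hankelBal j k
        = ∑ k ∈ Finset.range N, (if k = 0 then 0 else hankelBal j (k-1) * hankelBal i k) := by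
      rw [hankelBal_shift j i N (by omega)]
      exact Finset.sum_congr rfl fun k _ => Nat.mul_comm _ _
    have second : ∑ k ∈ Finset.range N, (if k = 0 then 0 else hankelBal i (k-1) * hankelBal j k)
        = ∑ k ∈ Finset.range N, hankelBal i k * hankelBal j (k+1) :=
      hankelBal_shift i j N (by omega)
    rw [first, second, ← Finset.sum_add_distrib]
    have recombine : ∀ k ∈ Finset.range N,
        (if k = 0 then 0 else hankelBal j (k-1) * hankelBal i k)
          + hankelBal i k * hankelBal j (k+1)
        = hankelBal i k * hankelBal (j+1) k := by
      intro k _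
      rw [hankelBal_succ, Nat.mul_add]
      rw [Nat.add_comm]
      congr 1
      split_ifs
      · rw [Nat.mul_zero]
      · rw [Nat.mul_comm]
    rw [Finset.sum_congr rfl recombine, ih (j+1) N (by omega)]
    congr 1
    omega

lemma hankelBal_star' (i j N : ℕ) (hi : i < N) :
    ∑ k ∈ Finset.range N, hankelBal i k * hankelBal j k = hankelC (i + j) := by
  have key : ∀ M, N ≤ M →
      ∑ k ∈ Finset.range N, hankelBal i k * hankelBal j k
        = ∑ k ∈ Finset.range M, hankelBal i k * hankelBal j k := by
    intro M hM
    exact Finset.sum_subset (Finset.range_subset_range.mpr hM) (fun k _ hk => by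
      rw [hankelBal_eq_zero (show i < k by
        have := Finset.mem_range.not.mp hk; omega), Nat.zero_mul])
  rw [key (N + i + j + 1) (by omega)]
  exact hankelBal_star i j _ (by omega)

section HankelK
variable {K : Type*} [CommRing K]

/-- Unipotent lower triangular transform built from ballot numbers. -/
def hankelL (a : K) : ℕ → ℕ → K
  | 0, k => if k = 0 then 1 else 0
  | i+1, k => -(2*a) * hankelL a i k + if k = 0 then 0 else (hankelBal i (k-1) : K)

/-- The Hankel moment sequence. -/
def hankelF (X a : K) : ℕ → K
  | 0 => X
  | m+1 => -(2*a) * hankelF X a m + (hankelC m : K)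

lemma hankelL_succ (a : K) (i k : ℕ) :
    hankelL a (i+1) k = -(2*a) * hankelL a i k + if k = 0 then 0 else (hankelBal i (k-1) : K) :=
  rfl

lemma hankelL_eq_zero (a : K) : ∀ {i k : ℕ}, i < k → hankelL a i k = 0 := by
  intro i
  induction i with
  | zero => intro k h; exact if_neg (by omega)
  | succ i ih =>
    intro k h
    rw [hankelL_succ, ih (by omega), if_neg (by omega : ¬ k = 0),
      hankelBal_eq_zero (by omega : i < k - 1)]
    simp

lemma hankelXL (X a : K) : ∀ j, X * hankelL a j 0 + hankelL a j 1 = hankelF X a j := by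
  intro j
  induction j with
  | zero =>
    show X * (if (0:ℕ) = 0 then (1:K) else 0) + (if (1:ℕ) = 0 then (1:K) else 0) = X
    simp
  | succ j ih =>
    rw [hankelL_succ, hankelL_succ]
    simp only [if_pos rfl, if_neg (one_ne_zero)]
    show X * (-(2 * a) * hankelL a j 0 + 0) +
      (-(2 * a) * hankelL a j 1 + (hankelBal j 0 : K)) = hankelF X a (j+1)
    rw [hankelBal_zero_eq]
    show _ = -(2*a) * hankelF X a j + (hankelC j : K)
    rw [← ih]
    ring

/-- The row vector obtained by applying the tridiagonal matrix to a row of L. -/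
def hankelY (X a : K) (j k : ℕ) : K :=
  if k = 0 then X * hankelL a j 0 + hankelL a j 1
  else 2*a * hankelL a j k + hankelL a j (k-1) + hankelL a j (k+1)

lemma hankelG (a : K) (n i : ℕ) (hi : i + 1 < n) : ∀ j,
    ∑ k ∈ Finset.range (n-1), (hankelBal i k : K) *
        (2*a * hankelL a j (k+1) + hankelL a j (k+2) + hankelL a j k)
      = (hankelC (i+j) : K) := by
  intro j
  induction j with
  | zero =>
    rw [Finset.sum_eq_single_of_mem 0 (Finset.mem_range.mpr (by omega))
      (fun b _ hb => by
        show (hankelBal i b : K) * (2*a * (if b+1 = 0 then (1:K) else 0)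
          + (if b+2 = 0 then (1:K) else 0) + (if b = 0 then (1:K) else 0)) = 0
        rw [if_neg (by omega), if_neg (by omega), if_neg hb]
        ring)]
    show (hankelBal i 0 : K) * (2*a * (if (0:ℕ)+1 = 0 then (1:K) else 0)
      + (if (0:ℕ)+2 = 0 then (1:K) else 0) + (if (0:ℕ) = 0 then (1:K) else 0)) = _
    rw [if_neg (by omega), if_neg (by omega), if_pos rfl, hankelBal_zero_eq]
    ring_nf
  | succ j ih =>
    have expand : ∀ k ∈ Finset.range (n-1),
        (hankelBal i k : K) * (2*a * hankelL a (j+1) (k+1) + hankelL a (j+1) (k+2)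
            + hankelL a (j+1) k)
        = -(2*a) * ((hankelBal i k : K) *
              (2*a * hankelL a j (k+1) + hankelL a j (k+2) + hankelL a j k))
          + 2*a * ((hankelBal i k * hankelBal j k : ℕ) : K)
          + ((hankelBal i k * hankelBal (j+1) k : ℕ) : K) := by
      intro k _
      rw [hankelL_succ, hankelL_succ, hankelL_succ, hankelBal_succ j k]
      rcases Nat.eq_zero_or_pos k with hk | hk
      · subst hk
        simp only [Nat.succ_ne_zero, ite_false, ite_true, reduceIte]
        push_cast
        ring
      · have hk' : ¬ (k = 0) := by omega
        simp only [hk', Nat.succ_ne_zero, ite_false, reduceIte]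
        push_cast
        ring
    rw [Finset.sum_congr rfl expand]
    rw [Finset.sum_add_distrib, Finset.sum_add_distrib, ← Finset.mul_sum, ← Finset.mul_sum,
      ih]
    rw [← Nat.cast_sum, ← Nat.cast_sum]
    rw [hankelBal_star' i j (n-1) (by omega), hankelBal_star' i (j+1) (n-1) (by omega)]
    have h1 : i + (j+1) = (i+j) + 1 := by omega
    rw [h1]
    ring

lemma hankelQ (X a : K) (n j : ℕ) : ∀ i, i < n →
    ∑ k ∈ Finset.range n, hankelL a i k * hankelY X a j k = hankelF X a (i+j) := by
  intro i
  induction i with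
  | zero =>
    intro hn
    rw [Finset.sum_eq_single_of_mem 0 (Finset.mem_range.mpr hn)
      (fun b _ hb => by
        show (if b = 0 then (1:K) else 0) * _ = 0
        rw [if_neg hb]; ring)]
    show (if (0:ℕ) = 0 then (1:K) else 0) * hankelY X a j 0 = hankelF X a (0+j)
    rw [if_pos rfl, one_mul, Nat.zero_add]
    show X * hankelL a j 0 + hankelL a j 1 = _
    exact hankelXL X a j
  | succ i ih =>
    intro hi
    have expand : ∀ k ∈ Finset.range n,
        hankelL a (i+1) k * hankelY X a j k
        = -(2*a) * (hankelL a i k * hankelY X a j k)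
          + (if k = 0 then 0 else (hankelBal i (k-1) : K)) * hankelY X a j k := by
      intro k _
      rw [hankelL_succ]
      ring
    rw [Finset.sum_congr rfl expand, Finset.sum_add_distrib, ← Finset.mul_sum,
      ih (by omega)]
    have hn1 : n = (n-1) + 1 := by omega
    rw [hn1, Finset.sum_range_succ' _ (n-1)]
    simp only [Nat.succ_ne_zero, ite_false, reduceIte, zero_mul, add_zero]
    have yform : ∀ k ∈ Finset.range (n-1),
        (hankelBal i (k+1-1) : K) * hankelY X a j (k+1)
        = (hankelBal i k : K) *
            (2*a * hankelL a j (k+1) + hankelL a j (k+2) + hankelL a j k) := by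
      intro k _
      unfold hankelY
      rw [if_neg (Nat.succ_ne_zero _)]
      simp only [Nat.add_sub_cancel, show k+1+1 = k+2 from rfl]
      ring
    rw [Finset.sum_congr rfl yform, hankelG a n i (by omega) j]
    show _ = hankelF X a (i+1+j)
    have : i+1+j = (i+j)+1 := by omega
    rw [this]
    show _ = -(2*a) * hankelF X a (i+j) + (hankelC (i+j) : K)
    ring

end HankelK

section HankelJ
variable {K : Type*} [CommRing K]

/-- The tridiagonal comparison matrix, as a function on ℕ. -/
def hankelJ (X a : K) (k l : ℕ) : K :=
  if k = l then (if k = 0 then X else 2*a) else if l = k+1 ∨ k = l+1 then 1 else 0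

lemma hankelJL (X a : K) (n j k : ℕ) (hj : j < n) (hk : k < n) :
    ∑ l ∈ Finset.range n, hankelJ X a k l * hankelL a j l = hankelY X a j k := by
  have split : ∀ l ∈ Finset.range n, hankelJ X a k l * hankelL a j l =
      (if l = k then (if k = 0 then X else 2*a) * hankelL a j l else 0)
      + ((if l = k+1 then hankelL a j l else 0)
      + (if k ≠ 0 ∧ l = k-1 then hankelL a j l else 0)) := by
    intro l _
    unfold hankelJ
    split_ifs <;> first | ring1 | (exfalso; omega)
  rw [Finset.sum_congr rfl split, Finset.sum_add_distrib]
  rw [Finset.sum_add_distrib (f := fun l => if l = k+1 then hankelL a j l else 0)]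
  have s1 : ∑ l ∈ Finset.range n, (if l = k then (if k = 0 then X else 2*a) * hankelL a j l else 0)
      = (if k = 0 then X else 2*a) * hankelL a j k := by
    rw [Finset.sum_ite_eq' (Finset.range n) k, if_pos (Finset.mem_range.mpr hk)]
  have s2 : ∑ l ∈ Finset.range n, (if l = k+1 then hankelL a j l else 0)
      = hankelL a j (k+1) := by
    rw [Finset.sum_ite_eq' (Finset.range n) (k+1)]
    rcases lt_or_ge (k+1) n with h | h
    · rw [if_pos (Finset.mem_range.mpr h)]
    · rw [if_neg (by simp [Finset.mem_range]; omega),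
        hankelL_eq_zero a (show j < k+1 by omega)]
  have s3 : ∑ l ∈ Finset.range n, (if k ≠ 0 ∧ l = k-1 then hankelL a j l else 0)
      = if k = 0 then 0 else hankelL a j (k-1) := by
    rcases Nat.eq_zero_or_pos k with hk0 | hk0
    · subst hk0
      simp
    · have hk0' : ¬ (k = 0) := by omega
      simp only [hk0', ite_false, ne_eq, not_false_eq_true, true_and]
      rw [Finset.sum_ite_eq' (Finset.range n) (k-1),
        if_pos (Finset.mem_range.mpr (by omega))]
  rw [s1, s2, s3]
  unfold hankelY
  rcases Nat.eq_zero_or_pos k with hk0 | hk0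
  · subst hk0
    simp only [ite_true, reduceIte]
    ring
  · have hk0' : ¬ (k = 0) := by omega
    simp only [hk0', ite_false]
    ring

/-- The tridiagonal matrix. -/
def hankelJmat (X a : K) (n : ℕ) : Matrix (Fin n) (Fin n) K :=
  Matrix.of fun k l => hankelJ X a k.val l.val

/-- The continuant sequence. -/
def hankelE (X a : K) : ℕ → K
  | 0 => 1
  | 1 => X
  | n+2 => 2*a * hankelE X a (n+1) - hankelE X a n

lemma succAbove_pen_val (n : ℕ) (m : Fin (n+1)) :
    (((Fin.last n).castSucc).succAbove m).val = if m.val < n then m.val else m.val + 1 := by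
  unfold Fin.succAbove
  split_ifs with h1 h2 h2
  · rfl
  · exfalso
    rw [Fin.castSucc_lt_castSucc_iff, Fin.lt_iff_val_lt_val, Fin.val_last] at h1
    omega
  · exfalso
    rw [Fin.castSucc_lt_castSucc_iff, Fin.lt_iff_val_lt_val, Fin.val_last] at h1
    omega
  · rfl

lemma hankelJmat_det (X a : K) : ∀ n, (hankelJmat X a n).det = hankelE X a n := by
  intro n
  induction n using Nat.strong_induction_on with
  | _ n ih =>
    match n with
    | 0 => simp [hankelE, Matrix.det_fin_zero]
    | 1 =>
      rw [Matrix.det_fin_one]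
      show hankelJ X a 0 0 = X
      simp [hankelJ]
    | n+2 => 
      set A := hankelJmat X a (n+2) with hA
      set jlast : Fin (n+2) := Fin.last (n+1) with hjlast
      set jn : Fin (n+2) := (Fin.last n).castSucc with hjn
      have hvlast : (jlast : ℕ) = n+1 := rfl
      have hvn : (jn : ℕ) = n := rfl
      rw [Matrix.det_succ_row A (Fin.last (n+1))]
      have collapse : ∀ j : Fin (n+2),
          (-1 : K) ^ ((Fin.last (n+1) : ℕ) + (j : ℕ)) * A (Fin.last (n+1)) j *
            (A.submatrix (Fin.last (n+1)).succAbove j.succAbove).det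
          = (if j = jn then (-1 : K) ^ ((Fin.last (n+1) : ℕ) + (jn : ℕ)) * A (Fin.last (n+1)) jn *
              (A.submatrix (Fin.last (n+1)).succAbove jn.succAbove).det else 0)
            + (if j = jlast then (-1 : K) ^ ((Fin.last (n+1) : ℕ) + (jlast : ℕ)) *
                A (Fin.last (n+1)) jlast *
              (A.submatrix (Fin.last (n+1)).succAbove jlast.succAbove).det else 0) := by
        intro j
        by_cases h1 : j = jn
        · subst h1
          rw [if_pos rfl, if_neg (by rw [Fin.ext_iff]; simp [hvn, hvlast]), add_zero]
        · by_cases h2 : j = jlast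
          · subst h2
            rw [if_pos rfl, if_neg h1, zero_add]
          · rw [if_neg h1, if_neg h2]
            have hAij : A (Fin.last (n+1)) j = 0 := by
              show hankelJ X a (Fin.last (n+1)).val j.val = 0
              have hj1 : j.val ≠ n := fun hc => h1 (Fin.ext (by rw [hc, hvn]))
              have hj2 : j.val ≠ n+1 := fun hc => h2 (Fin.ext (by rw [hc, hvlast]))
              have hjlt : j.val < n+2 := j.isLt
              unfold hankelJ
              rw [if_neg (by simp [Fin.val_last]; omega),
                if_neg (by simp [Fin.val_last]; omega)]
            rw [hAij]
            ring
      rw [Finset.sum_congr rfl (fun j _ => collapse j), Finset.sum_add_distrib,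
        Finset.sum_ite_eq' Finset.univ jn, Finset.sum_ite_eq' Finset.univ jlast,
        if_pos (Finset.mem_univ _), if_pos (Finset.mem_univ _)]
      -- last diagonal entry
      have hAll : A (Fin.last (n+1)) jlast = 2*a := by
        show hankelJ X a (n+1) (n+1) = 2*a
        unfold hankelJ
        rw [if_pos rfl, if_neg (by omega)]
      have hAln : A (Fin.last (n+1)) jn = 1 := by
        show hankelJ X a (n+1) n = 1
        unfold hankelJ
        rw [if_neg (by omega), if_pos (by omega)]
      -- the submatrix for jlast is J_{n+1}
      have hsublast : A.submatrix (Fin.last (n+1)).succAbove jlast.succAbove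
          = hankelJmat X a (n+1) := by
        rw [hjlast, Fin.succAbove_last]
        rfl
      -- the submatrix for jn
      have hsubn : (A.submatrix (Fin.last (n+1)).succAbove jn.succAbove).det
          = hankelE X a n := by
        rw [Fin.succAbove_last]
        set S := A.submatrix Fin.castSucc jn.succAbove with hS
        rw [Matrix.det_succ_column S (Fin.last n)]
        have hScol : ∀ i : Fin (n+1), S i (Fin.last n)
            = if (i : ℕ) = n then 1 else 0 := by
          intro i
          show hankelJ X a (Fin.castSucc i).val ((jn.succAbove (Fin.last n)).val) = _
          have hval : ((jn.succAbove (Fin.last n)).val) = n+1 := by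
            rw [hjn, succAbove_pen_val]
            simp [Fin.val_last]
          rw [hval]
          have hilt : (Fin.castSucc i).val = i.val := rfl
          unfold hankelJ
          rw [hilt]
          by_cases hi : (i : ℕ) = n
          · rw [if_neg (by omega), if_pos (by omega), if_pos hi]
          · rw [if_neg (by have := i.isLt; omega), if_neg (by have := i.isLt; omega),
              if_neg hi]
        have collapse2 : ∀ i : Fin (n+1),
            (-1 : K) ^ ((i : ℕ) + (Fin.last n : ℕ)) * S i (Fin.last n) *
              (S.submatrix i.succAbove (Fin.last n).succAbove).det
            = if i = Fin.last n then
                (-1 : K) ^ ((Fin.last n : ℕ) + (Fin.last n : ℕ)) * 1 *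
                  (S.submatrix (Fin.last n).succAbove (Fin.last n).succAbove).det
              else 0 := by
          intro i
          by_cases hi : i = Fin.last n
          · subst hi
            rw [if_pos rfl, hScol, if_pos (Fin.val_last n)]
          · rw [if_neg hi, hScol, if_neg (fun hc => hi (Fin.ext (by simpa using hc)))]
            ring
        rw [Finset.sum_congr rfl (fun i _ => collapse2 i),
          Finset.sum_ite_eq' Finset.univ (Fin.last n), if_pos (Finset.mem_univ _)]
        have hinner : S.submatrix (Fin.last n).succAbove (Fin.last n).succAbove
            = hankelJmat X a n := by
          rw [Fin.succAbove_last]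
          apply Matrix.ext
          intro k l
          show hankelJ X a ((Fin.castSucc (Fin.castSucc k)).val)
            ((jn.succAbove (Fin.castSucc l)).val) = hankelJ X a k.val l.val
          have hval : ((jn.succAbove (Fin.castSucc l)).val) = l.val := by
            rw [hjn, succAbove_pen_val]
            have := l.isLt
            rw [if_pos (by simpa using this)]
            rfl
          rw [hval]
          rfl
        rw [hinner, ih n (by omega)]
        have hsign : (-1 : K) ^ ((Fin.last n : ℕ) + (Fin.last n : ℕ)) = 1 :=
          Even.neg_one_pow ⟨n, by simp [Fin.val_last]⟩
        rw [hsign]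
        ring
      rw [hAll, hAln, hsublast, hsubn, ih (n+1) (by omega)]
      have hsign1 : (-1 : K) ^ ((Fin.last (n+1) : ℕ) + (jlast : ℕ)) = 1 := by
        rw [hvlast]; show (-1:K)^((n+1)+(n+1)) = 1
        exact Even.neg_one_pow ⟨n+1, rfl⟩
      have hsign2 : (-1 : K) ^ ((Fin.last (n+1) : ℕ) + (jn : ℕ)) = -1 := by
        rw [hvn]; show (-1:K)^((n+1)+n) = -1
        exact Odd.neg_one_pow ⟨n, by omega⟩
      rw [hsign1, hsign2]
      show _ = 2*a * hankelE X a (n+1) - hankelE X a n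
      ring

end HankelJ

section HankelFinal
variable {K : Type*} [CommRing K]

lemma hankelL_diag (a : K) : ∀ i, hankelL a i i = 1 := by
  intro i
  induction i with
  | zero => exact if_pos rfl
  | succ i ih =>
    rw [hankelL_succ, hankelL_eq_zero a (by omega), if_neg (Nat.succ_ne_zero _),
      Nat.add_sub_cancel, hankelBal_diag]
    ring

lemma hankelEntry (X a : K) : ∀ m,
    X * (-(2*a))^m + ∑ k ∈ Finset.range ((m+1)/2), (-(2*a))^(m-2*k-1) * (catalan k : K)
      = hankelF X a m := by
  intro m
  induction m with
  | zero =>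
    show X * (-(2*a))^0 + ∑ k ∈ Finset.range 0, _ = X
    simp
  | succ m ih =>
    show _ = -(2*a) * hankelF X a m + (hankelC m : K)
    rw [← ih]
    rcases Nat.even_or_odd m with ⟨t, ht⟩ | ⟨t, ht⟩
    · subst ht
      have h1 : (t+t+1+1)/2 = t+1 := by omega
      have h2 : (t+t+1)/2 = t := by omega
      rw [h1, h2, Finset.sum_range_succ]
      have hC : (hankelC (t+t) : K) = (catalan t : K) := by
        unfold hankelC
        rw [if_pos (by omega : (t+t) % 2 = 0), (by omega : (t+t)/2 = t)]
      rw [hC]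
      have h3 : t+t+1-2*t-1 = 0 := by omega
      rw [h3, pow_zero, one_mul]
      have h4 : ∀ k ∈ Finset.range t,
          (-(2*a))^(t+t+1-2*k-1) * (catalan k : K)
            = -(2*a) * ((-(2*a))^(t+t-2*k-1) * (catalan k : K)) := by
        intro k hk
        have hk' := Finset.mem_range.mp hk
        rw [(by omega : t+t+1-2*k-1 = (t+t-2*k-1)+1), pow_succ]
        ring
      rw [Finset.sum_congr rfl h4, ← Finset.mul_sum, pow_succ]
      ring
    · subst ht
      have h1 : (2*t+1+1+1)/2 = t+1 := by omega
      have h2 : (2*t+1+1)/2 = t+1 := by omega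
      rw [h1, h2]
      have hC : (hankelC (2*t+1) : K) = 0 := by
        unfold hankelC
        rw [if_neg (by omega)]
        simp
      rw [hC]
      have h4 : ∀ k ∈ Finset.range (t+1),
          (-(2*a))^(2*t+1+1-2*k-1) * (catalan k : K)
            = -(2*a) * ((-(2*a))^(2*t+1-2*k-1) * (catalan k : K)) := by
        intro k hk
        have hk' := Finset.mem_range.mp hk
        rw [(by omega : 2*t+1+1-2*k-1 = (2*t+1-2*k-1)+1), pow_succ]
        ring
      rw [Finset.sum_congr rfl h4, ← Finset.mul_sum, pow_succ]
      ring

open Polynomial in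
lemma hankelE_formula (X a : K) : ∀ m, hankelE X a (m+1)
    = (-1)^m * (X * (Chebyshev.U K (m:ℤ)).eval (-a)
        + (Chebyshev.U K ((m:ℤ)-1)).eval (-a)) := by
  intro m
  induction m using Nat.strong_induction_on with
  | _ m ih =>
    match m with
    | 0 =>
      show X = _
      norm_num [Chebyshev.U_zero, Chebyshev.U_neg_one]
    | 1 =>
      show 2*a*X - 1 = _
      norm_num [Chebyshev.U_one, Chebyshev.U_zero]
      ring
    | m+2 =>
      have e1 := ih (m+1) (by omega)
      have e2 := ih m (by omega)
      have hU := Chebyshev.U_add_two K (m:ℤ)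
      have hUe := congrArg (Polynomial.eval (-a)) hU
      simp only [Polynomial.eval_sub, Polynomial.eval_mul, Polynomial.eval_ofNat,
        Polynomial.eval_X] at hUe
      show 2*a * hankelE X a (m+2) - hankelE X a (m+1) = _
      rw [e1, e2]
      have c1 : ((m+2 : ℕ) : ℤ) = (m:ℤ)+2 := by push_cast; ring
      have c2 : ((m+1 : ℕ) : ℤ) = (m:ℤ)+1 := by push_cast; ring
      rw [c1, c2]
      rw [(by ring : ((m:ℤ)+2)-1 = (m:ℤ)+1), (by ring : ((m:ℤ)+1)-1 = (m:ℤ))]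
      have hU2 := Chebyshev.U_add_two K ((m:ℤ)-1)
      have hU2e := congrArg (Polynomial.eval (-a)) hU2
      simp only [Polynomial.eval_sub, Polynomial.eval_mul, Polynomial.eval_ofNat,
        Polynomial.eval_X] at hU2e
      rw [(by ring : (m:ℤ)-1+2 = (m:ℤ)+1), (by ring : (m:ℤ)-1+1 = (m:ℤ))] at hU2e
      rw [hUe, hU2e, pow_succ, pow_succ]
      ring

end HankelFinal

open Polynomial Matrix in
theorem hankel_det_catalan_chebyshev {K : Type*} [Field K] [CharZero K]
    (X a : K) (n : ℕ) (hn : 0 < n) :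
    det (of fun i j : Fin n =>
        X * (-2 * a) ^ (i.val + j.val) +
          ∑ k ∈ Finset.range ((i.val + j.val + 1) / 2),
            (-2 * a) ^ (i.val + j.val - 2 * k - 1) * (catalan k : K)) =
      (-1) ^ (n - 1) *
        (X * (Chebyshev.U K ((n : ℤ) - 1)).eval (-a) +
          (Chebyshev.U K ((n : ℤ) - 2)).eval (-a)) := by
  have hneg : (-2 : K) * a = -(2*a) := by ring
  have hmul : (Matrix.of fun i j : Fin n =>
        X * (-2 * a) ^ (i.val + j.val) +
          ∑ k ∈ Finset.range ((i.val + j.val + 1) / 2),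
            (-2 * a) ^ (i.val + j.val - 2 * k - 1) * (catalan k : K))
      = (Matrix.of fun i k : Fin n => hankelL a i.val k.val)
        * (hankelJmat X a n * (Matrix.of fun i k : Fin n => hankelL a i.val k.val)ᵀ) := by
    apply Matrix.ext
    intro i j
    simp only [Matrix.mul_apply, Matrix.transpose_apply, Matrix.of_apply, hankelJmat]
    rw [hneg, hankelEntry X a (i.val + j.val)]
    have step1 : ∀ k : Fin n,
        (∑ l : Fin n, hankelJ X a k.val l.val * hankelL a j.val l.val)
          = hankelY X a j.val k.val := by
      intro k
      rw [Fin.sum_univ_eq_sum_range (fun l => hankelJ X a k.val l * hankelL a j.val l) n]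
      exact hankelJL X a n j.val k.val j.isLt k.isLt
    rw [Finset.sum_congr rfl (fun k _ => by rw [step1 k])]
    rw [Fin.sum_univ_eq_sum_range (fun k => hankelL a i.val k * hankelY X a j.val k) n]
    exact (hankelQ X a n j.val i.val i.isLt).symm
  rw [hmul, Matrix.det_mul, Matrix.det_mul, Matrix.det_transpose]
  have hdetL : (Matrix.of fun i k : Fin n => hankelL a i.val k.val).det = 1 := by
    rw [Matrix.det_of_lowerTriangular _ (fun i j hij => by
      exact hankelL_eq_zero a (show i.val < j.val from hij))]
    exact Finset.prod_eq_one (fun i _ => hankelL_diag a i.val)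
  rw [hdetL, hankelJmat_det X a n]
  have hn1 : n = (n-1)+1 := by omega
  rw [hn1, hankelE_formula X a (n-1)]
  have c1 : (((n-1)+1 : ℕ) : ℤ) - 1 = ((n-1 : ℕ) : ℤ) := by push_cast; ring
  have c2 : (((n-1)+1 : ℕ) : ℤ) - 2 = ((n-1 : ℕ) : ℤ) - 1 := by push_cast; ring
  rw [Nat.add_sub_cancel, c1, c2]
  ring
end

section
/- For every non-negative integer n: (−1)·2^n + Σ_{k=0}^{⌊(n−1)/2⌋} 2^{n−2k−1} C_k equals −binom(n, n/2) if n is even, and equals −(1/2)·binom(n+1, (n+1)/2) if n is odd, where C_k is the k-th Catalan number. -/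
theorem catalan_sum_central_binomial (n : ℕ) :
    (-1 : ℚ) * 2 ^ n +
        ∑ k ∈ Finset.range ((n + 1) / 2), 2 ^ (n - 2 * k - 1) * (catalan k : ℚ) =
      if Even n then -(Nat.choose n (n / 2) : ℚ)
      else -(1 / 2) * (Nat.choose (n + 1) ((n + 1) / 2) : ℚ) := by
  induction n with
  | zero => simp
  | succ n ih =>
    rcases Nat.even_or_odd n with ⟨m, rfl⟩ | ⟨m, rfl⟩
    · -- n = m + m is even, n+1 odd
      have h1 : (m + m + 1) / 2 = m := by omega
      have h2 : (m + m + 1 + 1) / 2 = m + 1 := by omega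
      rw [h1] at ih
      rw [h2, if_neg (by simp [Nat.even_add_one, Nat.even_add]), Finset.sum_range_succ]
      have hsum : ∑ k ∈ Finset.range m, (2:ℚ) ^ (m + m + 1 - 2 * k - 1) * catalan k
          = 2 * ∑ k ∈ Finset.range m, (2:ℚ) ^ (m + m - 2 * k - 1) * catalan k := by
        rw [Finset.mul_sum]
        refine Finset.sum_congr rfl fun k hk => ?_
        have hk' : k < m := Finset.mem_range.mp hk
        have : m + m + 1 - 2 * k - 1 = (m + m - 2 * k - 1) + 1 := by omega
        rw [this, pow_succ]; ring
      rw [hsum]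
      rw [if_pos ⟨m, rfl⟩] at ih
      have hc : ((m:ℚ) + 1) * catalan m = (m.centralBinom : ℚ) := by
        exact_mod_cast congrArg (Nat.cast : ℕ → ℚ) (succ_mul_catalan_eq_centralBinom m)
      have hb : ((m:ℚ) + 1) * ((m+1).centralBinom : ℚ)
          = 2 * (2 * m + 1) * (m.centralBinom : ℚ) := by
        exact_mod_cast congrArg (Nat.cast : ℕ → ℚ) (Nat.succ_mul_centralBinom_succ m)
      have hcbN : Nat.choose (m + m) ((m+m)/2) = m.centralBinom := by
        rw [Nat.centralBinom]
        congr 1 <;> omega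
      have hcbN2 : Nat.choose (m + m + 1 + 1) (m + 1) = (m+1).centralBinom := by
        rw [Nat.centralBinom]
        congr 1; omega
      have heq : ((m + m).choose ((m+m)/2) : ℚ) = (m.centralBinom : ℚ) := by
        rw [hcbN]
      have heq2 : ((m + m + 1 + 1).choose (m+1) : ℚ) = ((m+1).centralBinom : ℚ) := by
        rw [hcbN2]
      rw [heq] at ih
      rw [heq2]
      have hm : ((m:ℚ) + 1) ≠ 0 := by positivity
      have hcat : (catalan m : ℚ) = (m.centralBinom : ℚ) / (m + 1) := by
        field_simp; linarith [hc]
      have hb' : ((m+1).centralBinom : ℚ) = 2 * (2 * m + 1) * (m.centralBinom : ℚ) / (m + 1) := by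
        field_simp; linarith [hb]
      rw [hcat, hb']
      have hS : ∑ k ∈ Finset.range m, (2:ℚ) ^ (m + m - 2 * k - 1) * catalan k
          = 2 ^ (m + m) - (m.centralBinom : ℚ) := by linarith [ih]
      rw [hS]
      have hz : m + m + 1 - 2 * m - 1 = 0 := by omega
      rw [hz, pow_zero, pow_succ]
      field_simp
      ring
    · -- n = 2m+1 odd, n+1 even
      have h1 : (2 * m + 1 + 1) / 2 = m + 1 := by omega
      have h2 : (2 * m + 1 + 1 + 1) / 2 = m + 1 := by omega
      rw [h1, if_neg (by simp [Nat.even_add_one, parity_simps])] at ih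
      rw [h2, if_pos (by exact ⟨m+1, by ring⟩)]
      have hsum : ∑ k ∈ Finset.range (m+1), (2:ℚ) ^ (2 * m + 1 + 1 - 2 * k - 1) * catalan k
          = 2 * ∑ k ∈ Finset.range (m+1), (2:ℚ) ^ (2 * m + 1 - 2 * k - 1) * catalan k := by
        rw [Finset.mul_sum]
        refine Finset.sum_congr rfl fun k hk => ?_
        have hk' : k < m + 1 := Finset.mem_range.mp hk
        have : 2 * m + 1 + 1 - 2 * k - 1 = (2 * m + 1 - 2 * k - 1) + 1 := by omega
        rw [this, pow_succ]; ring
      rw [hsum]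
      have he : (2 * m + 1 + 1) / 2 = m + 1 := by omega
      rw [he]
      -- careful: goal's choose index
      have : Nat.choose (2*m+1+1) ((2*m+1+1)/2) = Nat.choose (2*m+1+1) (m+1) := by rw [he]
      rw [pow_succ]
      linarith [ih]
end

section
/- For every positive integer n: det_{0≤i,j≤n−1}( 2^{−2⌈(i+j)/2⌉} · binom(2⌈(i+j)/2⌉, ⌈(i+j)/2⌉) ) = 2^{−n(n−1)}. -/
/-- Path counts: steps ±1 on ℕ with a loop at 0. `pf i k` = #paths of length `i` from 0 to `k`. -/
def pf : ℕ → ℕ → ℕ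
  | 0, 0 => 1
  | 0, _+1 => 0
  | i+1, 0 => pf i 0 + pf i 1
  | i+1, k+1 => pf i k + pf i (k+2)

lemma pf_eq_zero : ∀ i k : ℕ, i < k → pf i k = 0
  | 0, 0, h => absurd h (by omega)
  | 0, _+1, _ => rfl
  | i+1, 0, h => absurd h (by omega)
  | i+1, k+1, h => by
    show pf i k + pf i (k+2) = 0
    rw [pf_eq_zero i k (by omega), pf_eq_zero i (k+2) (by omega)]

lemma pf_closed : ∀ i k : ℕ, k ≤ i → pf i k = Nat.choose i ((i - k) / 2)
  | 0, 0, _ => rfl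
  | 0, k+1, h => absurd h (by omega)
  | i+1, 0, _ => by
    show pf i 0 + pf i 1 = _
    rcases Nat.eq_zero_or_pos i with hi | hi
    · subst hi; rfl
    rw [pf_closed i 0 (by omega), pf_closed i 1 hi]
    rcases Nat.even_or_odd i with ⟨t, ht⟩ | ⟨t, ht⟩
    · obtain ⟨u, hu⟩ : ∃ u, t = u + 1 := ⟨t - 1, by omega⟩
      have h1 : (i - 0) / 2 = u + 1 := by omega
      have h2 : (i - 1) / 2 = u := by omega
      have h3 : (i + 1 - 0) / 2 = u + 1 := by omega
      have h4 : i + 1 = (i) + 1 := rfl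
      rw [h1, h2, h3, Nat.choose_succ_succ i u, Nat.add_comm]
    · -- i = 2t+1
      have h1 : (i - 0) / 2 = t := by omega
      have h2 : (i - 1) / 2 = t := by omega
      have h3 : (i + 1 - 0) / 2 = t + 1 := by omega
      have h5 : i = 2 * t + 1 := by omega
      rw [h1, h2, h3, h5, Nat.choose_succ_succ (2*t+1) t, Nat.choose_symm_half t,
        Nat.two_mul, Nat.add_comm]
  | i+1, k+1, h => by
    show pf i k + pf i (k+2) = _
    have hk : k ≤ i := by omega
    rw [pf_closed i k hk]
    rcases Nat.lt_or_ge i (k+2) with hi | hi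
    · rw [pf_eq_zero i (k+2) hi]
      have h1 : (i - k) / 2 = 0 := by omega
      have h2 : (i + 1 - (k+1)) / 2 = 0 := by omega
      simp [h1, h2]
    · rw [pf_closed i (k+2) hi]
      obtain ⟨u, hu⟩ : ∃ u, (i - k) / 2 = u + 1 := ⟨(i-k)/2 - 1, by omega⟩
      have h1 : (i - (k+2)) / 2 = u := by omega
      have h2 : (i + 1 - (k+1)) / 2 = u + 1 := by omega
      rw [hu, h1, h2, Nat.choose_succ_succ i u, Nat.add_comm]

lemma pf_diag (i : ℕ) : pf i i = 1 := by
  rw [pf_closed i i le_rfl]; simp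

open Finset in
/-- Transfer symmetry: the step matrix is symmetric. -/
lemma pf_swap (i j N : ℕ) (hi : i < N) (hj : j < N) :
    ∑ k ∈ range (N+1), pf (i+1) k * pf j k
      = ∑ k ∈ range (N+1), pf i k * pf (j+1) k := by
  have expand : ∀ a b : ℕ, a < N → b < N →
      ∑ k ∈ range (N+1), pf (a+1) k * pf b k
        = pf a 0 * pf b 0 + ((∑ k ∈ range (N+1), pf a k * pf b (k+1))
            + ∑ k ∈ range (N+1), pf a (k+1) * pf b k) := by
    intro a b ha hb
    rw [Finset.sum_range_succ' (fun k => pf (a+1) k * pf b k) N]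
    show (∑ k ∈ range N, (pf a k + pf a (k+2)) * pf b (k+1)) + (pf a 0 + pf a 1) * pf b 0 = _
    have e1 : ∑ k ∈ range N, (pf a k + pf a (k+2)) * pf b (k+1)
        = (∑ k ∈ range N, pf a k * pf b (k+1)) + ∑ k ∈ range N, pf a (k+2) * pf b (k+1) := by
      rw [← Finset.sum_add_distrib]; congr 1; ext k; ring
    rw [e1]
    have e2 : ∑ k ∈ range (N+1), pf a k * pf b (k+1)
        = ∑ k ∈ range N, pf a k * pf b (k+1) := by
      rw [Finset.sum_range_succ, pf_eq_zero a N ha, Nat.zero_mul, Nat.add_zero]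
    have e3 : ∑ k ∈ range (N+1), pf a (k+1) * pf b k
        = (∑ k ∈ range N, pf a (k+2) * pf b (k+1)) + pf a 1 * pf b 0 := by
      rw [Finset.sum_range_succ' (fun k => pf a (k+1) * pf b k) N]
    rw [e2, e3]; ring
  rw [expand i j hi hj]
  have h2 : ∑ k ∈ range (N+1), pf i k * pf (j+1) k
      = ∑ k ∈ range (N+1), pf (j+1) k * pf i k :=
    Finset.sum_congr rfl fun k _ => mul_comm _ _
  rw [h2, expand j i hj hi]
  have c1 : ∑ k ∈ range (N+1), pf j k * pf i (k+1)
      = ∑ k ∈ range (N+1), pf i (k+1) * pf j k :=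
    Finset.sum_congr rfl fun k _ => mul_comm _ _
  have c2 : ∑ k ∈ range (N+1), pf j (k+1) * pf i k
      = ∑ k ∈ range (N+1), pf i k * pf j (k+1) :=
    Finset.sum_congr rfl fun k _ => mul_comm _ _
  rw [c1, c2]
  ring

open Finset in
lemma pf_sum : ∀ i j : ℕ, ∑ k ∈ range (i+j+1), pf i k * pf j k = pf (i+j) 0
  | 0, j => by
    rw [Finset.sum_range_succ' (fun k => pf 0 k * pf j k) (0+j)]
    simp [pf]
  | i+1, j => by
    have h1 : (i+1) + j + 1 = (i+j+1) + 1 := by ring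
    rw [h1, pf_swap i j (i+j+1) (by omega) (by omega)]
    have h2 : (i+j+1) + 1 = i + (j+1) + 1 := by ring
    rw [h2, pf_sum i (j+1)]
    congr 1; omega

-- sums of `pf i k * pf j k` are stable once the range passes `min i j`.
open Finset in
lemma pf_sum_ext (i j N M : ℕ) (hN : i < N) (hM : N ≤ M) :
    ∑ k ∈ range M, pf i k * pf j k = ∑ k ∈ range N, pf i k * pf j k := by
  symm
  apply Finset.sum_subset (Finset.range_subset_range.2 hM)
  intro k _ hk
  rw [pf_eq_zero i k (by simp only [Finset.mem_range, not_lt] at hk; omega), Nat.zero_mul]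

/-- Key Nat identity relating the original entry to `2^{-(s)} C(s, s/2)`. -/
lemma entry_nat (s : ℕ) :
    Nat.choose (2 * ((s+1)/2)) ((s+1)/2) * 2 ^ s = Nat.choose s (s/2) * 2 ^ (2 * ((s+1)/2)) := by
  rcases Nat.even_or_odd s with ⟨t, ht⟩ | ⟨t, ht⟩
  · have h1 : (s+1)/2 = t := by omega
    have h2 : s/2 = t := by omega
    have h3 : s = 2 * t := by omega
    rw [h1, h2, h3]
  · have h1 : (s+1)/2 = t + 1 := by omega
    have h2 : s/2 = t := by omega
    have h3 : s = 2 * t + 1 := by omega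
    rw [h1, h2, h3]
    have h4 : 2 * (t+1) = (2*t+1) + 1 := by ring
    rw [h4, Nat.choose_succ_succ (2*t+1) t, Nat.choose_symm_half t]
    ring

open Matrix in
theorem hankel_det_central_binomial (n : ℕ) (hn : 0 < n) :
    det (of fun i j : Fin n =>
        (2 : ℝ) ^ (-(2 * (((i.val + j.val + 1) / 2 : ℕ) : ℤ))) *
          (Nat.choose (2 * ((i.val + j.val + 1) / 2)) ((i.val + j.val + 1) / 2) : ℝ)) =
      (2 : ℝ) ^ (-((n * (n - 1) : ℕ) : ℤ)) := by
  set L : Matrix (Fin n) (Fin n) ℝ :=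
    Matrix.of fun i k : Fin n => (2:ℝ) ^ (-(i.val : ℤ)) * (pf i.val k.val : ℝ) with hL
  have hfact : (of fun i j : Fin n =>
        (2 : ℝ) ^ (-(2 * (((i.val + j.val + 1) / 2 : ℕ) : ℤ))) *
          (Nat.choose (2 * ((i.val + j.val + 1) / 2)) ((i.val + j.val + 1) / 2) : ℝ))
      = L * Lᵀ := by
    ext i j
    rw [Matrix.mul_apply]
    simp only [hL, Matrix.transpose_apply, Matrix.of_apply]
    set s := i.val + j.val with hs
    have sum_eq : ∑ k : Fin n, ((2:ℝ) ^ (-(i.val : ℤ)) * (pf i.val k.val : ℝ)) *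
        ((2:ℝ) ^ (-(j.val : ℤ)) * (pf j.val k.val : ℝ))
        = (2:ℝ) ^ (-(s : ℤ)) * ((pf s 0 : ℕ) : ℝ) := by
      have e1 : ∑ k : Fin n, ((2:ℝ) ^ (-(i.val : ℤ)) * (pf i.val k.val : ℝ)) *
          ((2:ℝ) ^ (-(j.val : ℤ)) * (pf j.val k.val : ℝ))
          = (2:ℝ) ^ (-(i.val : ℤ)) * (2:ℝ) ^ (-(j.val : ℤ)) *
            ∑ k : Fin n, ((pf i.val k.val : ℝ) * (pf j.val k.val : ℝ)) := by
        rw [Finset.mul_sum]; congr 1; ext k; ring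
      rw [e1]
      have e2 : ∑ k : Fin n, ((pf i.val k.val : ℝ) * (pf j.val k.val : ℝ))
          = ((∑ k ∈ Finset.range n, pf i.val k * pf j.val k : ℕ) : ℝ) := by
        push_cast
        rw [← Fin.sum_univ_eq_sum_range (fun k => (pf i.val k : ℝ) * (pf j.val k : ℝ)) n]
      rw [e2]
      have e3 : ∑ k ∈ Finset.range n, pf i.val k * pf j.val k = pf s 0 := by
        rw [pf_sum_ext i.val j.val (i.val + 1) n (by omega) (by omega),
          ← pf_sum_ext i.val j.val (i.val + 1) (s + 1) (by omega) (by omega), pf_sum]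
      rw [e3, ← zpow_add₀ (by norm_num : (2:ℝ) ≠ 0)]
      congr 2
      rw [hs]; push_cast; omega
    rw [sum_eq, pf_closed s 0 (Nat.zero_le s)]
    have hcast : ((Nat.choose (2 * ((s+1)/2)) ((s+1)/2) : ℕ) : ℝ) * 2 ^ s
        = ((Nat.choose s ((s - 0)/2) : ℕ) : ℝ) * 2 ^ (2 * ((s+1)/2)) := by
      simp only [Nat.sub_zero]
      exact_mod_cast entry_nat s
    have h2 : (0:ℝ) < 2 := by norm_num
    have key : (2 : ℝ) ^ (-(2 * (((s + 1) / 2 : ℕ) : ℤ))) *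
        (Nat.choose (2 * ((s + 1) / 2)) ((s + 1) / 2) : ℝ)
        = (2:ℝ) ^ (-(s : ℤ)) * (Nat.choose s ((s - 0)/2) : ℝ) := by
      rw [_root_.zpow_neg, _root_.zpow_neg]
      rw [inv_mul_eq_div, inv_mul_eq_div, div_eq_div_iff
        (by positivity) (by positivity)]
      calc (Nat.choose (2 * ((s+1)/2)) ((s+1)/2) : ℝ) * (2:ℝ) ^ (s:ℤ)
          = ((Nat.choose (2 * ((s+1)/2)) ((s+1)/2) : ℕ) : ℝ) * 2 ^ s := by
            norm_cast
        _ = ((Nat.choose s ((s - 0)/2) : ℕ) : ℝ) * 2 ^ (2 * ((s+1)/2)) := hcast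
        _ = (Nat.choose s ((s - 0)/2) : ℝ) * (2:ℝ) ^ ((2 * (((s+1)/2 : ℕ) : ℤ))) := by
            norm_cast
    exact key
  rw [hfact, Matrix.det_mul, Matrix.det_transpose]
  have hLtri : L.BlockTriangular OrderDual.toDual := by
    intro i j hij
    simp only [hL, Matrix.of_apply]
    rw [pf_eq_zero i.val j.val hij]
    simp
  rw [Matrix.det_of_lowerTriangular L hLtri]
  have hdiag : ∀ i : Fin n, L i i = (2:ℝ) ^ (-(i.val : ℤ)) := by
    intro i
    simp [hL, pf_diag]
  have hdiag2 : ∀ i ∈ Finset.univ, L i i = ((2:ℝ)⁻¹) ^ (i.val) := by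
    intro i _
    rw [hdiag i, _root_.zpow_neg, zpow_natCast, inv_pow]
  rw [Finset.prod_congr rfl hdiag2, Finset.prod_pow_eq_pow_sum]
  set S := ∑ i : Fin n, i.val with hS
  have h2S : S * 2 = n * (n - 1) := by
    rw [hS, Fin.sum_univ_eq_sum_range (fun i => i) n]
    exact Finset.sum_range_id_mul_two n
  rw [← pow_add, ← h2S, inv_pow, _root_.zpow_neg, zpow_natCast]
  congr 2
  omega
end

section
/- Let Y be a variable. For every positive integer n: det_{0≤i,j≤n−1}( Y + 2^{−2⌈(i+j)/2⌉} · binom(2⌈(i+j)/2⌉, ⌈(i+j)/2⌉) ) = 2^{−n(n−1)} (Y·n + 1). -/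
/-!
The entries `m_k = C(k, ⌊k/2⌋) / 2^k` are the return probabilities of the simple random walk on
`ℕ` that stays at `0` instead of stepping to `-1`. Its transfer operator is symmetric, so with
`B i k` the probability of being at `i` after `k` steps, `Bᵀ B` is the Hankel matrix `(m_{k+l})`.
`B` is upper triangular with diagonal `2^{-k}`, and its columns sum to `1`, so adding `Y` to every
entry gives `Bᵀ (1 + Y 𝟙𝟙ᵀ) B`, whose determinant is `det B ^ 2 * (1 + n Y)`.
-/

open Finset Matrix

theorem det_transpose_mul_self_add_const {R ι : Type*} [CommRing R] [Fintype ι] [DecidableEq ι]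
    (B : Matrix ι ι R) (hB : ∀ k, ∑ i, B i k = 1) (Y : R) :
    (Bᵀ * B + of fun _ _ => Y).det = B.det ^ 2 * (1 + Fintype.card ι * Y) := by
  set J := replicateCol Unit (fun _ : ι => Y) * replicateRow Unit (fun _ : ι => (1 : R))
  have hJ : Bᵀ * J * B = of fun _ _ => Y := by
    ext k l
    simp [J, Matrix.mul_apply, ← Finset.sum_mul, ← Finset.mul_sum, hB]
  have hfactor : Bᵀ * B + (of fun _ _ => Y) = Bᵀ * (1 + J) * B := by
    rw [Matrix.mul_add, Matrix.add_mul, Matrix.mul_one, hJ]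
  rw [hfactor, det_mul, det_mul, det_transpose, det_one_add_replicateCol_mul_replicateRow]
  simp only [dotProduct, one_mul, sum_const, card_univ, nsmul_eq_mul]
  ring

def loopStep {R : Type*} [Add R] (f : ℕ → R) : ℕ → R
  | 0 => f 0 + f 1
  | i + 1 => f i + f (i + 2)

theorem sum_loopStep_mul_add {R : Type*} [CommSemiring R] (f g : ℕ → R) (N : ℕ) :
    ∑ i ∈ range (N + 1), loopStep f i * g i + f N * g (N + 1) =
      ∑ i ∈ range (N + 1), f i * loopStep g i + f (N + 1) * g N := by
  induction N with
  | zero => simp only [zero_add, sum_range_one, loopStep]; ring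
  | succ N ih =>
    calc ∑ i ∈ range (N + 2), loopStep f i * g i + f (N + 1) * g (N + 2)
        = (∑ i ∈ range (N + 1), loopStep f i * g i + f N * g (N + 1)) +
            (f (N + 2) * g (N + 1) + f (N + 1) * g (N + 2)) := by
          rw [sum_range_succ]; simp only [loopStep]; ring
      _ = (∑ i ∈ range (N + 1), f i * loopStep g i + f (N + 1) * g N) +
            (f (N + 2) * g (N + 1) + f (N + 1) * g (N + 2)) := by rw [ih]
      _ = ∑ i ∈ range (N + 2), f i * loopStep g i + f (N + 2) * g (N + 1) := by
          rw [sum_range_succ _ (N + 1)]; simp only [loopStep]; ring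

/-- Folding `ℤ` onto `ℕ` by `j ↦ -1 - j` turns `±1` walks into the walks of `loopStep`, so this
counts the `±1` walks on `ℤ` of length `k` from `0` that end at `i` or at `-1 - i`. -/
def walkCount (i k : ℕ) : ℕ := k.choose ((k + i + 1) / 2)

theorem walkCount_eq_zero {i k : ℕ} (h : k < i) : walkCount i k = 0 :=
  Nat.choose_eq_zero_of_lt (by omega)

theorem walkCount_self (k : ℕ) : walkCount k k = 1 := by
  simp [walkCount, show (k + k + 1) / 2 = k by omega]

theorem walkCount_zero_right (i : ℕ) : walkCount i 0 = if i = 0 then 1 else 0 := by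
  rcases i with _ | i
  · rfl
  · exact walkCount_eq_zero i.succ_pos

theorem walkCount_succ (i k : ℕ) : walkCount i (k + 1) = loopStep (walkCount · k) i := by
  rcases i with _ | i
  · have hsymm : k.choose (k / 2) = k.choose ((k + 1) / 2) := Nat.choose_symm_of_eq_add (by omega)
    simp only [walkCount, loopStep, show (k + 1 + 0 + 1) / 2 = k / 2 + 1 by omega,
      Nat.choose_succ_succ', hsymm]
  · simp only [walkCount, loopStep, show (k + 1 + (i + 1) + 1) / 2 = (k + i + 1) / 2 + 1 by omega,
      show (k + (i + 2) + 1) / 2 = (k + i + 1) / 2 + 1 by omega, Nat.choose_succ_succ']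

theorem sum_walkCount {k N : ℕ} (h : k < N) : ∑ i ∈ range N, walkCount i k = 2 ^ k := by
  induction k generalizing N with
  | zero => simp [walkCount_zero_right, h]
  | succ k ih =>
    obtain ⟨M, rfl⟩ : ∃ M, N = M + 1 := ⟨N - 1, by omega⟩
    have htel := sum_loopStep_mul_add (walkCount · k) (fun _ => 1) M
    have hconst : ∀ i, loopStep (fun _ => (1 : ℕ)) i = 2 := by rintro (_ | _) <;> rfl
    simp only [hconst, mul_one, walkCount_eq_zero (show k < M by omega),
      walkCount_eq_zero (show k < M + 1 by omega), add_zero, ← sum_mul, ← walkCount_succ] at htel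
    rw [htel, ih (by omega), pow_succ]

theorem sum_walkCount_mul {k l N : ℕ} (h : k + l + 2 ≤ 2 * N) :
    ∑ i ∈ range N, walkCount i k * walkCount i l = walkCount 0 (k + l) := by
  induction k generalizing l with
  | zero =>
    rw [sum_eq_single_of_mem 0 (mem_range.2 (by omega))]
    · simp [walkCount_zero_right]
    · intro i _ hi
      simp [walkCount_zero_right, hi]
  | succ k ih =>
    obtain ⟨M, rfl⟩ : ∃ M, N = M + 1 := ⟨N - 1, by omega⟩
    have htel := sum_loopStep_mul_add (walkCount · k) (walkCount · l) M
    have hleft : walkCount M k * walkCount (M + 1) l = 0 := by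
      rcases lt_or_ge k M with hk | hk
      · rw [walkCount_eq_zero hk, zero_mul]
      · rw [walkCount_eq_zero (show l < M + 1 by omega), mul_zero]
    have hright : walkCount (M + 1) k * walkCount M l = 0 := by
      rcases lt_or_ge k (M + 1) with hk | hk
      · rw [walkCount_eq_zero hk, zero_mul]
      · rw [walkCount_eq_zero (show l < M by omega), mul_zero]
    simp only [hleft, hright, add_zero, ← walkCount_succ] at htel
    rw [htel, ih (by omega), Nat.add_right_comm, Nat.add_assoc]

theorem walkCount_zero_div_two_pow (m : ℕ) :
    (walkCount 0 m : ℚ) / 2 ^ m = (2 : ℚ) ^ (-(2 * (((m + 1) / 2 : ℕ) : ℤ))) *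
      ((2 * ((m + 1) / 2)).choose ((m + 1) / 2) : ℚ) := by
  rw [_root_.zpow_neg, show (2 * (((m + 1) / 2 : ℕ) : ℤ)) = ((2 * ((m + 1) / 2) : ℕ) : ℤ) by
    push_cast; rfl, zpow_natCast, walkCount, add_zero]
  rcases Nat.even_or_odd' m with ⟨t, rfl | rfl⟩
  · rw [show (2 * t + 1) / 2 = t by omega]
    ring
  · have hcentral : (2 * (t + 1)).choose (t + 1) = 2 * (2 * t + 1).choose (t + 1) := by
      rw [show 2 * (t + 1) = 2 * t + 1 + 1 by ring, Nat.choose_succ_succ', Nat.choose_symm_half]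
      ring
    rw [show (2 * t + 1 + 1) / 2 = t + 1 by omega, hcentral]
    push_cast
    ring

def walkMatrix (n : ℕ) : Matrix (Fin n) (Fin n) ℚ := of fun i k => walkCount i k / 2 ^ (k : ℕ)

theorem sum_walkMatrix_apply {n : ℕ} (k : Fin n) : ∑ i, walkMatrix n i k = 1 := by
  simp only [walkMatrix, of_apply, ← Finset.sum_div]
  rw [Fin.sum_univ_eq_sum_range (fun i => (walkCount i k : ℚ)), ← Nat.cast_sum,
    sum_walkCount k.isLt]
  simp

theorem transpose_walkMatrix_mul_self_apply {n : ℕ} (k l : Fin n) :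
    ((walkMatrix n)ᵀ * walkMatrix n) k l = (walkCount 0 (k + l) : ℚ) / 2 ^ (k + l : ℕ) := by
  simp only [Matrix.mul_apply, transpose_apply, walkMatrix, of_apply, div_mul_div_comm, ← pow_add,
    ← Finset.sum_div, ← Nat.cast_mul]
  rw [Fin.sum_univ_eq_sum_range (fun i => ((walkCount i k * walkCount i l : ℕ) : ℚ)),
    ← Nat.cast_sum, sum_walkCount_mul (by omega)]

theorem det_walkMatrix (n : ℕ) : (walkMatrix n).det = ((2 : ℚ) ^ (n * (n - 1) / 2))⁻¹ := by
  have htri : (walkMatrix n).IsUpperTriangular := fun i k h => by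
    simp [walkMatrix, walkCount_eq_zero (show (k : ℕ) < i from h)]
  rw [det_of_isUpperTriangular htri, ← sum_range_id, ← prod_pow_eq_pow_sum, ← prod_inv_distrib,
    ← Fin.prod_univ_eq_prod_range]
  simp [walkMatrix, walkCount_self]

theorem hankel_det_central_binomial_plus_Y_general (Y : ℚ) (n : ℕ) :
    det (of fun i j : Fin n =>
        Y + (2 : ℚ) ^ (-(2 * (((i.val + j.val + 1) / 2 : ℕ) : ℤ))) *
          (Nat.choose (2 * ((i.val + j.val + 1) / 2)) ((i.val + j.val + 1) / 2) : ℚ)) =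
      (2 : ℚ) ^ (-((n * (n - 1) : ℕ) : ℤ)) * (Y * n + 1) := by
  have hcholesky : (of fun i j : Fin n =>
        Y + (2 : ℚ) ^ (-(2 * (((i.val + j.val + 1) / 2 : ℕ) : ℤ))) *
          (Nat.choose (2 * ((i.val + j.val + 1) / 2)) ((i.val + j.val + 1) / 2) : ℚ)) =
      (walkMatrix n)ᵀ * walkMatrix n + of fun _ _ => Y := by
    ext i j
    rw [Matrix.add_apply, transpose_walkMatrix_mul_self_apply, walkCount_zero_div_two_pow, of_apply,
      of_apply, add_comm]
  rw [hcholesky, det_transpose_mul_self_add_const _ sum_walkMatrix_apply, det_walkMatrix,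
    Fintype.card_fin, inv_pow, ← pow_mul, Nat.div_mul_cancel n.even_mul_pred_self.two_dvd,
    _root_.zpow_neg, zpow_natCast]
  ring

open Matrix in
theorem hankel_det_central_binomial_plus_Y (Y : ℚ) (n : ℕ) (hn : 0 < n) :
    det (of fun i j : Fin n =>
        Y + (2 : ℚ) ^ (-(2 * (((i.val + j.val + 1) / 2 : ℕ) : ℤ))) *
          (Nat.choose (2 * ((i.val + j.val + 1) / 2)) ((i.val + j.val + 1) / 2) : ℚ)) =
      (2 : ℚ) ^ (-((n * (n - 1) : ℕ) : ℤ)) * (Y * n + 1) :=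
  hankel_det_central_binomial_plus_Y_general Y n
end

section
/- Let Y be a variable. For every positive integer n: det_{0≤i,j≤n−1}( Y + 2^{−2⌈(i+j+1)/2⌉} · binom(2⌈(i+j+1)/2⌉, ⌈(i+j+1)/2⌉) ) = (−1)^{binom(n,2)} · 2^{−n²} · ( 2⌈n/2⌉·Y + 1 ). -/
/-!
Scaling row `i` and column `j` by `2 ^ i` and `2 ^ j` turns the matrix into
`(1/2) • (H + 2Y • w wᵀ)`, where `w = (2 ^ i)` and `H` is the Hankel matrix of the integers
`μ s = C(s+1, ⌊s/2⌋+1)`. The monic polynomials `P₀ = 1`, `P₁ = X - 2`,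
`P (i+2) = (X + 2(-1)^i) P (i+1) + P i` are orthogonal for the functional `L (X ^ s) = μ s`, with
`L (P i ^ 2) = (-1) ^ i`: the modified moments `L (X ^ s * P i)` obey the same recurrence in `i`,
and an explicit binomial closed form for them is checked by Pascal's rule. So the unitriangular
coefficient matrix `W` of the `P i` diagonalises `H` by congruence, `W w = (P i (2)) = ([i even])`,
and the matrix determinant lemma gives `det (H + c • w wᵀ) = (-1)^C(n,2) (1 + c ⌈n/2⌉)`.
-/

open Polynomial Finset Matrix

namespace Nat

theorem choose_add_two_add_two (m r : ℕ) :
    (m + 2).choose (r + 2) = m.choose (r + 2) + 2 * m.choose (r + 1) + m.choose r := by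
  simp only [choose_succ_succ']
  ring

theorem choose_two_add_choose_two_add_self (n : ℕ) : n.choose 2 + n.choose 2 + n = n ^ 2 := by
  rw [← two_mul, choose_two_right, Nat.mul_div_cancel' (even_mul_pred_self n).two_dvd]
  cases n <;> simp; ring

end Nat

namespace Fin

theorem prod_pow_val {M : Type*} [CommMonoid M] (a : M) (n : ℕ) :
    ∏ i : Fin n, a ^ (i : ℕ) = a ^ n.choose 2 := by
  rw [prod_univ_eq_prod_range (a ^ ·), prod_pow_eq_pow_sum, sum_range_id, Nat.choose_two_right]

theorem sum_ite_even {R : Type*} [AddCommMonoidWithOne R] (n : ℕ) :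
    ∑ i : Fin n, (if Even (i : ℕ) then (1 : R) else 0) = ((n + 1) / 2 : ℕ) := by
  rw [sum_univ_eq_sum_range (fun i => if Even i then (1 : R) else 0)]
  induction n with
  | zero => simp
  | succ n ih =>
    rw [sum_range_succ, ih]
    rcases Nat.even_or_odd' n with ⟨m, rfl | rfl⟩
    · rw [if_pos (even_two_mul m), show (2 * m + 1 + 1) / 2 = (2 * m + 1) / 2 + 1 by omega,
        Nat.cast_succ]
    · rw [if_neg (Nat.not_even_iff_odd.mpr (odd_two_mul_add_one m)),
        show (2 * m + 1 + 1 + 1) / 2 = (2 * m + 1 + 1) / 2 by omega, add_zero]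

end Fin

namespace Matrix

theorem det_add_vecMulVec_of_mul_mul_transpose_eq_diagonal {K n : Type*} [Field K] [Fintype n]
    [DecidableEq n] {W H : Matrix n n K} {d : n → K} (hW : W.det = 1)
    (hWH : W * H * Wᵀ = diagonal d) (hd : ∀ i, d i ≠ 0) (a b : n → K) :
    (H + vecMulVec a b).det = (∏ i, d i) * (1 + ∑ i, (W *ᵥ a) i * (W *ᵥ b) i / d i) := by
  have hcongr : W * (H + vecMulVec a b) * Wᵀ =
      diagonal d * (1 + vecMulVec (fun i => (W *ᵥ a) i / d i) (W *ᵥ b)) := by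
    rw [Matrix.mul_add, Matrix.add_mul, hWH, mul_vecMulVec, vecMulVec_mul, vecMul_transpose,
      Matrix.mul_add, Matrix.mul_one, mul_vecMulVec]
    congr 2
    ext i
    rw [mulVec_diagonal, mul_div_cancel₀ _ (hd i)]
  calc (H + vecMulVec a b).det = (W * (H + vecMulVec a b) * Wᵀ).det := by
        rw [det_mul, det_mul, det_transpose, hW, one_mul, mul_one]
    _ = _ := by
        rw [hcongr, det_mul, det_diagonal, vecMulVec_eq Unit,
          det_one_add_replicateCol_mul_replicateRow, dotProduct]
        simp only [mul_comm ((W *ᵥ b) _), div_mul_eq_mul_div]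

end Matrix

namespace CentralBinomialHankel

def moment (s : ℕ) : ℚ := ((s + 1).choose (s / 2 + 1) : ℚ)

noncomputable def momentFunctional : ℚ[X] →ₗ[ℚ] ℚ :=
  lsum fun k => LinearMap.mulRight ℚ (moment k)

theorem momentFunctional_monomial (k : ℕ) (a : ℚ) :
    momentFunctional (monomial k a) = a * moment k := by
  simp [momentFunctional]

theorem momentFunctional_X_pow (k : ℕ) : momentFunctional (X ^ k) = moment k := by
  rw [X_pow_eq_monomial, momentFunctional_monomial, one_mul]

theorem momentFunctional_mul_eq_sum {n : ℕ} (p q : ℚ[X]) (hq : q.natDegree < n) :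
    momentFunctional (q * p) = ∑ l ∈ range n, q.coeff l * momentFunctional (X ^ l * p) := by
  conv_lhs => rw [q.as_sum_range' n hq]
  simp only [Finset.sum_mul, map_sum, ← C_mul_X_pow_eq_monomial, C_mul', smul_mul_assoc,
    map_smul, smul_eq_mul]

noncomputable def orthoPoly : ℕ → ℚ[X]
  | 0 => 1
  | 1 => X - C 2
  | i + 2 => (X + C (2 * (-1) ^ i)) * orthoPoly (i + 1) + orthoPoly i

theorem orthoPoly_monic_natDegree (i : ℕ) :
    (orthoPoly i).Monic ∧ (orthoPoly i).natDegree = i := by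
  induction i using Nat.twoStepInduction with
  | zero => simp [orthoPoly]
  | one => exact ⟨monic_X_sub_C 2, natDegree_X_sub_C 2⟩
  | more i ih₀ ih₁ =>
    have hmonic : ((X + C (2 * (-1) ^ i)) * orthoPoly (i + 1)).Monic :=
      (monic_X_add_C _).mul ih₁.1
    have hdeg : ((X + C (2 * (-1) ^ i)) * orthoPoly (i + 1)).natDegree = i + 2 := by
      rw [(monic_X_add_C _).natDegree_mul ih₁.1, natDegree_X_add_C, ih₁.2]
      ring
    have hlt : (orthoPoly i).degree < ((X + C (2 * (-1) ^ i)) * orthoPoly (i + 1)).degree :=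
      degree_lt_degree (by omega)
    exact ⟨hmonic.add_of_left hlt, by rw [orthoPoly, natDegree_add_eq_left_of_degree_lt hlt, hdeg]⟩

theorem natDegree_orthoPoly (i : ℕ) : (orthoPoly i).natDegree = i :=
  (orthoPoly_monic_natDegree i).2

theorem orthoPoly_coeff_self (i : ℕ) : (orthoPoly i).coeff i = 1 := by
  obtain ⟨hmonic, hdeg⟩ := orthoPoly_monic_natDegree i
  rw [← hmonic.coeff_natDegree, hdeg]

theorem orthoPoly_eval_two (i : ℕ) : (orthoPoly i).eval 2 = if Even i then 1 else 0 := by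
  induction i using Nat.twoStepInduction with
  | zero => simp [orthoPoly]
  | one => simp [orthoPoly]
  | more i ih₀ ih₁ =>
    rcases Nat.even_or_odd i with h | h <;>
      simp [orthoPoly, ih₀, ih₁, h, h.neg_one_pow, Nat.even_add_one, parity_simps]

noncomputable def modifiedMoment (i s : ℕ) : ℚ := momentFunctional (X ^ s * orthoPoly i)

theorem modifiedMoment_add_two (i s : ℕ) :
    modifiedMoment (i + 2) s =
      modifiedMoment (i + 1) (s + 1) + 2 * (-1) ^ i * modifiedMoment (i + 1) s +
        modifiedMoment i s := by
  simp only [modifiedMoment]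
  rw [orthoPoly, add_mul, mul_add, mul_add, pow_succ, mul_assoc, mul_left_comm, C_mul',
    mul_smul_comm, map_add, map_add, map_smul, smul_eq_mul]

def oddChoose (k j : ℕ) : ℚ := ((2 * j + 1).choose (j + k + 1) : ℚ)

theorem oddChoose_eq_zero_of_lt {k j : ℕ} (h : j < k) : oddChoose k j = 0 := by
  rw [oddChoose, Nat.choose_eq_zero_of_lt (by omega), Nat.cast_zero]

theorem oddChoose_self (k : ℕ) : oddChoose k k = 1 := by
  rw [oddChoose, show k + k + 1 = 2 * k + 1 by ring, Nat.choose_self, Nat.cast_one]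

theorem oddChoose_succ_succ (k j : ℕ) :
    oddChoose (k + 1) (j + 1) = oddChoose (k + 2) j + 2 * oddChoose (k + 1) j + oddChoose k j := by
  rw [oddChoose, oddChoose, oddChoose, oddChoose, show 2 * (j + 1) + 1 = 2 * j + 1 + 2 by ring,
    show j + 1 + (k + 1) + 1 = j + k + 1 + 2 by ring, Nat.choose_add_two_add_two]
  push_cast
  ring_nf

theorem moment_two_mul (j : ℕ) : moment (2 * j) = oddChoose 0 j := by
  rw [moment, oddChoose, Nat.mul_div_cancel_left j two_pos]

theorem moment_two_mul_add_one (j : ℕ) : moment (2 * j + 1) = 2 * oddChoose 0 j := by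
  rw [moment, oddChoose, show (2 * j + 1) / 2 = j by omega, Nat.choose_succ_succ',
    ← Nat.choose_symm_half]
  push_cast
  ring

theorem moment_two_mul_add_two (j : ℕ) :
    moment (2 * j + 2) = oddChoose 1 j + 3 * oddChoose 0 j := by
  rw [moment, oddChoose, oddChoose, show (2 * j + 2) / 2 + 1 = j + 2 by omega,
    show 2 * j + 2 + 1 = 2 * j + 1 + 2 by ring, Nat.choose_add_two_add_two, Nat.choose_symm_half]
  push_cast
  ring_nf

theorem modifiedMoment_closed_form (k : ℕ) :
    (∀ j, modifiedMoment (2 * k) (2 * j) = oddChoose k j ∧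
      modifiedMoment (2 * k) (2 * j + 1) = 2 * oddChoose k j) ∧
    (∀ j, modifiedMoment (2 * k + 1) (2 * j) = 0 ∧
      modifiedMoment (2 * k + 1) (2 * j + 1) = oddChoose (k + 1) j - oddChoose k j) := by
  induction k with
  | zero =>
    have h₀ (s : ℕ) : modifiedMoment 0 s = moment s := by
      rw [modifiedMoment, orthoPoly, mul_one, momentFunctional_X_pow]
    have h₁ (s : ℕ) : modifiedMoment 1 s = moment (s + 1) - 2 * moment s := by
      rw [modifiedMoment, orthoPoly, mul_sub, ← pow_succ, mul_comm (X ^ s), C_mul', map_sub,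
        map_smul, momentFunctional_X_pow, momentFunctional_X_pow, smul_eq_mul]
    refine ⟨fun j => ⟨?_, ?_⟩, fun j => ⟨?_, ?_⟩⟩
    · rw [h₀, moment_two_mul]
    · rw [h₀, moment_two_mul_add_one]
    · rw [h₁, moment_two_mul_add_one, moment_two_mul, sub_self]
    · rw [h₁, moment_two_mul_add_two, moment_two_mul_add_one]
      ring
  | succ k ih =>
    have hsign : (-1 : ℚ) ^ (2 * k) = 1 := by rw [pow_mul]; norm_num
    have heven (j : ℕ) : modifiedMoment (2 * k + 2) (2 * j) = oddChoose (k + 1) j ∧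
        modifiedMoment (2 * k + 2) (2 * j + 1) = 2 * oddChoose (k + 1) j := by
      rw [modifiedMoment_add_two, modifiedMoment_add_two, (ih.2 j).1, (ih.2 j).2, (ih.1 j).1,
        (ih.1 j).2, show 2 * j + 1 + 1 = 2 * (j + 1) by ring, (ih.2 (j + 1)).1, hsign]
      constructor <;> ring
    rw [show 2 * (k + 1) = 2 * k + 2 by ring, show 2 * k + 2 + 1 = 2 * k + 1 + 2 by ring]
    refine ⟨heven, fun j => ⟨?_, ?_⟩⟩
    · rw [modifiedMoment_add_two, (heven j).1, (heven j).2, (ih.2 j).1, pow_succ, hsign]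
      ring
    · rw [modifiedMoment_add_two, pow_succ, hsign, show 2 * j + 1 + 1 = 2 * (j + 1) by ring,
        (heven (j + 1)).1, (heven j).2, (ih.2 j).2, oddChoose_succ_succ]
      ring

theorem modifiedMoment_eq_zero_of_lt {i s : ℕ} (h : s < i) : modifiedMoment i s = 0 := by
  obtain ⟨k, rfl | rfl⟩ := Nat.even_or_odd' i <;> obtain ⟨j, rfl | rfl⟩ := Nat.even_or_odd' s
  · rw [((modifiedMoment_closed_form k).1 j).1, oddChoose_eq_zero_of_lt (by omega)]
  · rw [((modifiedMoment_closed_form k).1 j).2, oddChoose_eq_zero_of_lt (by omega), mul_zero]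
  · rw [((modifiedMoment_closed_form k).2 j).1]
  · rw [((modifiedMoment_closed_form k).2 j).2, oddChoose_eq_zero_of_lt (by omega),
      oddChoose_eq_zero_of_lt (by omega), sub_zero]

theorem modifiedMoment_self (i : ℕ) : modifiedMoment i i = (-1) ^ i := by
  obtain ⟨k, rfl | rfl⟩ := Nat.even_or_odd' i
  · rw [((modifiedMoment_closed_form k).1 k).1, oddChoose_self, pow_mul]
    norm_num
  · rw [((modifiedMoment_closed_form k).2 k).2, oddChoose_self,
      oddChoose_eq_zero_of_lt (Nat.lt_succ_self k), pow_succ, pow_mul]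
    norm_num

theorem momentFunctional_orthoPoly_mul_orthoPoly (i j : ℕ) :
    momentFunctional (orthoPoly i * orthoPoly j) = if i = j then (-1) ^ i else 0 := by
  wlog hij : i ≤ j generalizing i j
  · rw [mul_comm, this j i (by omega)]
    rcases eq_or_ne i j with rfl | hne
    · rfl
    · rw [if_neg hne.symm, if_neg hne]
  rw [momentFunctional_mul_eq_sum _ _ ((natDegree_orthoPoly i).trans_lt (Nat.lt_succ_self i)),
    sum_eq_single_of_mem i (self_mem_range_succ i)]
  · rw [← modifiedMoment, orthoPoly_coeff_self, one_mul]
    rcases hij.eq_or_lt with rfl | hlt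
    · rw [if_pos rfl, modifiedMoment_self]
    · rw [if_neg hlt.ne, modifiedMoment_eq_zero_of_lt hlt]
  · intro l hl hli
    rw [← modifiedMoment, modifiedMoment_eq_zero_of_lt (by simp at hl; omega), mul_zero]

def hankelMoment (n : ℕ) : Matrix (Fin n) (Fin n) ℚ := of fun k l => moment (k + l)

noncomputable def orthoMatrix (n : ℕ) : Matrix (Fin n) (Fin n) ℚ :=
  of fun i k => (orthoPoly i).coeff k

def twoPowVec (n : ℕ) : Fin n → ℚ := fun k => 2 ^ (k : ℕ)

theorem det_orthoMatrix (n : ℕ) : (orthoMatrix n).det = 1 := by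
  rw [det_of_isLowerTriangular]
  · exact prod_eq_one fun i _ => orthoPoly_coeff_self i
  · intro i k hik
    exact coeff_eq_zero_of_natDegree_lt ((natDegree_orthoPoly i).trans_lt hik)

theorem orthoMatrix_mul_hankelMoment_mul_transpose (n : ℕ) :
    orthoMatrix n * hankelMoment n * (orthoMatrix n)ᵀ =
      diagonal fun i : Fin n => (-1 : ℚ) ^ (i : ℕ) := by
  ext i j
  have hrow (l : ℕ) :
      modifiedMoment i l = ∑ k : Fin n, (orthoPoly i).coeff k * moment (k + l) := by
    rw [modifiedMoment, mul_comm, momentFunctional_mul_eq_sum _ _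
      ((natDegree_orthoPoly i).trans_lt i.isLt), ← Fin.sum_univ_eq_sum_range
      (fun k => (orthoPoly i).coeff k * momentFunctional (X ^ k * X ^ l))]
    simp only [← pow_add, momentFunctional_X_pow]
  have horth := momentFunctional_orthoPoly_mul_orthoPoly j i
  rw [momentFunctional_mul_eq_sum _ _ ((natDegree_orthoPoly j).trans_lt j.isLt),
    ← Fin.sum_univ_eq_sum_range] at horth
  simp only [mul_apply, transpose_apply, orthoMatrix, hankelMoment, of_apply, diagonal_apply]
  calc _ = ∑ l : Fin n, (orthoPoly j).coeff l * modifiedMoment i l := by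
        simp only [hrow, mul_comm]
    _ = _ := by
      refine horth.trans ?_
      rcases eq_or_ne j i with rfl | hne
      · rw [if_pos rfl, if_pos rfl]
      · rw [if_neg (Fin.val_ne_of_ne hne), if_neg hne.symm]

theorem orthoMatrix_mulVec_twoPowVec (n : ℕ) :
    orthoMatrix n *ᵥ twoPowVec n = fun i : Fin n => if Even (i : ℕ) then (1 : ℚ) else 0 := by
  ext i
  rw [← orthoPoly_eval_two, eval_eq_sum_range' ((natDegree_orthoPoly i).trans_lt i.isLt),
    ← Fin.sum_univ_eq_sum_range (fun k => (orthoPoly i).coeff k * 2 ^ k)]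
  rfl

theorem det_hankelMoment_add_vecMulVec (n : ℕ) (c : ℚ) :
    (hankelMoment n + vecMulVec (c • twoPowVec n) (twoPowVec n)).det =
      (-1) ^ n.choose 2 * (1 + c * ((n + 1) / 2 : ℕ)) := by
  rw [det_add_vecMulVec_of_mul_mul_transpose_eq_diagonal (det_orthoMatrix n)
    (orthoMatrix_mul_hankelMoment_mul_transpose n) (fun i => pow_ne_zero _ (by norm_num)),
    mulVec_smul, orthoMatrix_mulVec_twoPowVec, Fin.prod_pow_val, ← Fin.sum_ite_even, mul_sum]
  congr 2
  refine sum_congr rfl fun i _ => ?_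
  by_cases hi : Even (i : ℕ)
  · simp [hi, hi.neg_one_pow]
  · simp [hi]

theorem zpow_mul_centralBinom_eq_moment_div (s : ℕ) :
    (2 : ℚ) ^ (-(2 * (((s + 2) / 2 : ℕ) : ℤ))) *
        ((2 * ((s + 2) / 2)).choose ((s + 2) / 2) : ℚ) = moment s / 2 ^ (s + 1) := by
  rw [_root_.zpow_neg, ← Nat.cast_two (R := ℤ), ← Nat.cast_mul, zpow_natCast]
  obtain ⟨j, rfl | rfl⟩ := Nat.even_or_odd' s
  · have h := moment_two_mul_add_one j
    rw [moment, show (2 * j + 1) / 2 + 1 = j + 1 by omega] at h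
    rw [show (2 * j + 2) / 2 = j + 1 by omega, moment_two_mul,
      show 2 * (j + 1) = 2 * j + 1 + 1 by ring, h, pow_succ]
    field_simp
  · rw [moment, show (2 * j + 1 + 2) / 2 = j + 1 by omega,
      show (2 * j + 1) / 2 + 1 = j + 1 by omega, show 2 * (j + 1) = 2 * j + 1 + 1 by ring]
    field_simp

theorem matrix_eq_diagonal_mul_smul_mul_diagonal (Y : ℚ) (n : ℕ) :
    (of fun i j : Fin n =>
        Y + (2 : ℚ) ^ (-(2 * (((i.val + j.val + 2) / 2 : ℕ) : ℤ))) *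
          (Nat.choose (2 * ((i.val + j.val + 2) / 2)) ((i.val + j.val + 2) / 2) : ℚ)) =
      diagonal (fun i : Fin n => (2⁻¹ : ℚ) ^ (i : ℕ)) *
        ((2⁻¹ : ℚ) • (hankelMoment n + vecMulVec ((2 * Y) • twoPowVec n) (twoPowVec n))) *
        diagonal (fun i : Fin n => (2⁻¹ : ℚ) ^ (i : ℕ)) := by
  ext i j
  simp only [of_apply, zpow_mul_centralBinom_eq_moment_div, diagonal_mul, mul_diagonal,
    Matrix.smul_apply, Matrix.add_apply, vecMulVec_apply, hankelMoment, twoPowVec, Pi.smul_apply,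
    smul_eq_mul, pow_add, inv_pow]
  field_simp
  ring

end CentralBinomialHankel

open CentralBinomialHankel

open Matrix in
theorem hankel_det_central_binomial_shifted_plus_Y_general (Y : ℚ) (n : ℕ) :
    det (of fun i j : Fin n =>
        Y + (2 : ℚ) ^ (-(2 * (((i.val + j.val + 2) / 2 : ℕ) : ℤ))) *
          (Nat.choose (2 * ((i.val + j.val + 2) / 2)) ((i.val + j.val + 2) / 2) : ℚ)) =
      (-1 : ℚ) ^ (Nat.choose n 2) * (2 : ℚ) ^ (-((n ^ 2 : ℕ) : ℤ)) *
        (2 * (((n + 1) / 2 : ℕ) : ℚ) * Y + 1) := by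
  rw [matrix_eq_diagonal_mul_smul_mul_diagonal, det_mul, det_mul, det_smul,
    det_hankelMoment_add_vecMulVec, det_diagonal, Fin.prod_pow_val, Fintype.card_fin,
    _root_.zpow_neg, zpow_natCast, ← Nat.choose_two_add_choose_two_add_self, pow_add, pow_add,
    inv_pow, inv_pow]
  field_simp
  ring

open Matrix in
theorem hankel_det_central_binomial_shifted_plus_Y (Y : ℚ) (n : ℕ) (hn : 0 < n) :
    det (of fun i j : Fin n =>
        Y + (2 : ℚ) ^ (-(2 * (((i.val + j.val + 2) / 2 : ℕ) : ℤ))) *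
          (Nat.choose (2 * ((i.val + j.val + 2) / 2)) ((i.val + j.val + 2) / 2) : ℚ)) =
      (-1 : ℚ) ^ (Nat.choose n 2) * (2 : ℚ) ^ (-((n ^ 2 : ℕ) : ℤ)) *
        (2 * (((n + 1) / 2 : ℕ) : ℚ) * Y + 1) :=
  hankel_det_central_binomial_shifted_plus_Y_general Y n
end
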